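/- arXiv:1503.03560 — 11 statements merged into one kernel-verified Lean document; each statement's English description precedes it below -/
import Mathlib

section
/- The sum s_n = Σ_{k=0}^{n-1} C(n+1, k+1)/C(2n+2, 2k+2) satisfies the recursion (2n+3)·s_{n+1} = (n+2)·s_n + 1 for all n ≥ 1. -/
lemma s_rec_key (k j : ℕ) :
    (2 * ((k:ℚ)+j) + 3) * ((k+j+2).choose (k+1) : ℚ) / ((2*(k+j)+4).choose (2*k+2) : ℚ)
    = (2*(j:ℚ)+1) * ((k+j+1).choose (k+1) : ℚ) / ((2*(k+j)+2).choose (2*k+2) : ℚ) := by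
  rw [Nat.cast_choose ℚ (by omega : k+1 ≤ k+j+2),
      Nat.cast_choose ℚ (by omega : 2*k+2 ≤ 2*(k+j)+4),
      Nat.cast_choose ℚ (by omega : k+1 ≤ k+j+1),
      Nat.cast_choose ℚ (by omega : 2*k+2 ≤ 2*(k+j)+2)]
  have e1 : k+j+2-(k+1) = j+1 := by omega
  have e2 : 2*(k+j)+4-(2*k+2) = 2*j+2 := by omega
  have e3 : k+j+1-(k+1) = j := by omega
  have e4 : 2*(k+j)+2-(2*k+2) = 2*j := by omega
  rw [e1, e2, e3, e4]
  have f1 : Nat.factorial (k+j+2) = (k+j+2) * Nat.factorial (k+j+1) := Nat.factorial_succ _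
  have f2 : Nat.factorial (2*(k+j)+4) = (2*(k+j)+4) * ((2*(k+j)+3) * Nat.factorial (2*(k+j)+2)) := by
    rw [show 2*(k+j)+4 = (2*(k+j)+3)+1 by ring, Nat.factorial_succ,
       show 2*(k+j)+3 = (2*(k+j)+2)+1 by ring, Nat.factorial_succ]
  have f3 : Nat.factorial (j+1) = (j+1) * Nat.factorial j := Nat.factorial_succ _
  have f4 : Nat.factorial (2*j+2) = (2*j+2) * ((2*j+1) * Nat.factorial (2*j)) := by
    rw [show 2*j+2 = (2*j+1)+1 by ring, Nat.factorial_succ,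
       show 2*j+1 = (2*j)+1 by ring, Nat.factorial_succ]
  rw [f1, f2, f3, f4]
  push_cast
  have h1 : (Nat.factorial (k+j+1) : ℚ) ≠ 0 := Nat.cast_ne_zero.2 (Nat.factorial_ne_zero _)
  have h2 : (Nat.factorial (2*(k+j)+2) : ℚ) ≠ 0 := Nat.cast_ne_zero.2 (Nat.factorial_ne_zero _)
  have h3 : (Nat.factorial (k+1) : ℚ) ≠ 0 := Nat.cast_ne_zero.2 (Nat.factorial_ne_zero _)
  have h4 : (Nat.factorial (2*k+2) : ℚ) ≠ 0 := Nat.cast_ne_zero.2 (Nat.factorial_ne_zero _)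
  have h5 : (Nat.factorial j : ℚ) ≠ 0 := Nat.cast_ne_zero.2 (Nat.factorial_ne_zero _)
  have h6 : (Nat.factorial (2*j) : ℚ) ≠ 0 := Nat.cast_ne_zero.2 (Nat.factorial_ne_zero _)
  field_simp
  ring

lemma s_rec_symm (n k : ℕ) (hk : k < n) :
    ((n+1).choose (n-1-k+1) : ℚ) / ((2*n+2).choose (2*(n-1-k)+2) : ℚ)
    = ((n+1).choose (k+1) : ℚ) / ((2*n+2).choose (2*k+2) : ℚ) := by
  rw [show n-1-k+1 = (n+1)-(k+1) by omega,
      show 2*(n-1-k)+2 = (2*n+2)-(2*k+2) by omega,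
      Nat.choose_symm (by omega : k+1 ≤ n+1),
      Nat.choose_symm (by omega : 2*k+2 ≤ 2*n+2)]

lemma s_rec_zero (n : ℕ) (hn : 1 ≤ n) :
    ∑ k ∈ Finset.range n, ((n:ℚ) - 1 - 2*k) *
      (((n+1).choose (k+1) : ℚ) / ((2*n+2).choose (2*k+2) : ℚ)) = 0 := by
  set S := ∑ k ∈ Finset.range n, ((n:ℚ) - 1 - 2*k) *
      (((n+1).choose (k+1) : ℚ) / ((2*n+2).choose (2*k+2) : ℚ)) with hS
  have hrefl := Finset.sum_range_reflect
    (fun k => ((n:ℚ) - 1 - 2*k) *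
      (((n+1).choose (k+1) : ℚ) / ((2*n+2).choose (2*k+2) : ℚ))) n
  have hneg : S = -S := by
    nth_rewrite 1 [hS]
    rw [← hrefl, ← Finset.sum_neg_distrib]
    refine Finset.sum_congr rfl fun k hk => ?_
    have hk' : k < n := Finset.mem_range.1 hk
    rw [s_rec_symm n k hk']
    have hc : ((n-1-k : ℕ) : ℚ) = (n:ℚ) - 1 - k := by
      have : ((n-1-k : ℕ) : ℚ) = ((n - 1 - k : ℤ) : ℚ) := by
        push_cast [show (n:ℤ)-1-k = ((n-1-k : ℕ) : ℤ) by omega]; ring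
      rw [this]; push_cast; ring
    rw [hc]; ring
  linarith

theorem s_recursion
    (s : ℕ → ℚ)
    (hs : ∀ n : ℕ, s n = ∑ k ∈ Finset.range n,
      (Nat.choose (n + 1) (k + 1) : ℚ) / (Nat.choose (2 * n + 2) (2 * k + 2) : ℚ)) :
    ∀ n : ℕ, 1 ≤ n → (2 * (n : ℚ) + 3) * s (n + 1) = ((n : ℚ) + 2) * s n + 1 := by
  intro n hn
  rw [hs, hs, Finset.mul_sum, Finset.mul_sum]
  have step1 : ∀ k ∈ Finset.range (n+1),
      (2 * (n:ℚ) + 3) * ((Nat.choose (n+1+1) (k+1) : ℚ) / (Nat.choose (2*(n+1)+2) (2*k+2) : ℚ))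
      = (2*((n-k : ℕ):ℚ)+1) * ((Nat.choose (n+1) (k+1) : ℚ) / (Nat.choose (2*n+2) (2*k+2) : ℚ)) := by
    intro k hk
    have hk' : k ≤ n := Nat.lt_succ_iff.1 (Finset.mem_range.1 hk)
    obtain ⟨j, rfl⟩ := Nat.exists_eq_add_of_le hk'
    have h := s_rec_key k j
    rw [show k + j + 1 + 1 = k + j + 2 by ring, show 2*(k+j+1)+2 = 2*(k+j)+4 by ring,
        show k + j - k = j by omega]
    push_cast at h ⊢
    linear_combination h
  rw [Finset.sum_congr rfl step1, Finset.sum_range_succ]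
  have hlast : (2*((n-n : ℕ):ℚ)+1) *
      ((Nat.choose (n+1) (n+1) : ℚ) / (Nat.choose (2*n+2) (2*n+2) : ℚ)) = 1 := by
    simp [Nat.choose_self]
  rw [hlast]
  have step2 : ∀ k ∈ Finset.range n,
      (2*((n-k : ℕ):ℚ)+1) * ((Nat.choose (n+1) (k+1) : ℚ) / (Nat.choose (2*n+2) (2*k+2) : ℚ))
      = ((n:ℚ)+2) * ((Nat.choose (n+1) (k+1) : ℚ) / (Nat.choose (2*n+2) (2*k+2) : ℚ))
        + ((n:ℚ) - 1 - 2*k) * ((Nat.choose (n+1) (k+1) : ℚ) / (Nat.choose (2*n+2) (2*k+2) : ℚ)) := by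
    intro k hk
    have hk' : k < n := Finset.mem_range.1 hk
    have hc : ((n-k : ℕ) : ℚ) = (n:ℚ) - k := by
      have : ((n-k : ℕ) : ℤ) = (n:ℤ) - k := by omega
      exact_mod_cast congrArg (fun z : ℤ => (z : ℚ)) this
    rw [hc]; ring
  rw [Finset.sum_congr rfl step2, Finset.sum_add_distrib, s_rec_zero n hn, add_zero]
end

section
/- For all n ≥ 1 and 0 ≤ k ≤ n-1, the identity 2(n+2)·F(k,n) − 2(2n+3)·F(k,n+1) = F(k+1,n)·R(k+1,n) − F(k,n)·R(k,n) holds, where F(k,n) = C(n+1,k+1)/C(2n+2,2k+2) and R(k,n) = 2n−2k+1. -/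
theorem F_R_identity
    (F : ℕ → ℕ → ℚ) (R : ℕ → ℕ → ℚ)
    (hF : ∀ k n : ℕ, F k n = (Nat.choose (n + 1) (k + 1) : ℚ) / (Nat.choose (2 * n + 2) (2 * k + 2) : ℚ))
    (hR : ∀ k n : ℕ, R k n = 2 * (n : ℚ) - 2 * (k : ℚ) + 1) :
    ∀ n : ℕ, 1 ≤ n → ∀ k : ℕ, k ≤ n - 1 →
      2 * ((n : ℚ) + 2) * F k n - 2 * (2 * (n : ℚ) + 3) * F k (n + 1)
        = F (k + 1) n * R (k + 1) n - F k n * R k n := by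
  intro n hn k hk
  obtain ⟨m, rfl⟩ : ∃ m, n = k + m + 1 := ⟨n - k - 1, by omega⟩
  simp only [hF, hR]
  rw [show (k+m+1)+1 = k+m+2 by ring, show 2*(k+m+1)+2 = 2*k+2*m+4 by ring,
      show (k+m+2)+1 = k+m+3 by ring, show 2*((k+m+1)+1)+2 = 2*k+2*m+6 by ring,
      show 2*(k+1)+2 = 2*k+4 by ring, show (k+1)+1 = k+2 by ring]
  rw [Nat.cast_choose ℚ (show k+1 ≤ k+m+2 by omega),
      Nat.cast_choose ℚ (show 2*k+2 ≤ 2*k+2*m+4 by omega),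
      Nat.cast_choose ℚ (show k+1 ≤ k+m+3 by omega),
      Nat.cast_choose ℚ (show 2*k+2 ≤ 2*k+2*m+6 by omega),
      Nat.cast_choose ℚ (show k+2 ≤ k+m+2 by omega),
      Nat.cast_choose ℚ (show 2*k+4 ≤ 2*k+2*m+4 by omega)]
  rw [show k+m+2-(k+1) = m+1 by omega, show 2*k+2*m+4-(2*k+2) = 2*m+2 by omega,
      show k+m+3-(k+1) = m+2 by omega, show 2*k+2*m+6-(2*k+2) = 2*m+4 by omega,
      show k+m+2-(k+2) = m by omega, show 2*k+2*m+4-(2*k+4) = 2*m by omega]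
  have f1 : ((k+2).factorial : ℚ) = (k+2) * (k+1).factorial := by
    rw [show k+2 = (k+1)+1 by ring, Nat.factorial_succ]; push_cast; ring
  have f2 : ((m+1).factorial : ℚ) = (m+1) * m.factorial := by
    rw [Nat.factorial_succ]; push_cast; ring
  have f3 : ((m+2).factorial : ℚ) = (m+2) * (m+1) * m.factorial := by
    rw [show m+2 = (m+1)+1 by ring, Nat.factorial_succ, Nat.factorial_succ]; push_cast; ring
  have f4 : ((k+m+3).factorial : ℚ) = (k+m+3) * (k+m+2).factorial := by
    rw [show k+m+3 = (k+m+2)+1 by ring, Nat.factorial_succ]; push_cast; ring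
  have f5 : ((2*k+4).factorial : ℚ) = (2*k+4) * (2*k+3) * (2*k+2).factorial := by
    rw [show 2*k+4 = (2*k+3)+1 by ring, Nat.factorial_succ,
        show 2*k+3 = (2*k+2)+1 by ring, Nat.factorial_succ]; push_cast; ring
  have f6 : ((2*m+2).factorial : ℚ) = (2*m+2) * (2*m+1) * (2*m).factorial := by
    rw [show 2*m+2 = (2*m+1)+1 by ring, Nat.factorial_succ,
        show 2*m+1 = (2*m)+1 by ring, Nat.factorial_succ]; push_cast; ring
  have f7 : ((2*m+4).factorial : ℚ) = (2*m+4) * (2*m+3) * (2*m+2) * (2*m+1) * (2*m).factorial := by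
    rw [show 2*m+4 = (2*m+3)+1 by ring, Nat.factorial_succ,
        show 2*m+3 = (2*m+2)+1 by ring, Nat.factorial_succ,
        show 2*m+2 = (2*m+1)+1 by ring, Nat.factorial_succ,
        show 2*m+1 = (2*m)+1 by ring, Nat.factorial_succ]; push_cast; ring
  have f8 : ((2*k+2*m+6).factorial : ℚ) = (2*k+2*m+6) * (2*k+2*m+5) * (2*k+2*m+4).factorial := by
    rw [show 2*k+2*m+6 = (2*k+2*m+5)+1 by ring, Nat.factorial_succ,
        show 2*k+2*m+5 = (2*k+2*m+4)+1 by ring, Nat.factorial_succ]; push_cast; ring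
  rw [f1, f2, f3, f4, f5, f6, f7, f8]
  have h1 : ((k+1).factorial : ℚ) ≠ 0 := by positivity
  have h2 : (m.factorial : ℚ) ≠ 0 := by positivity
  have h3 : (((k:ℕ)+m+2).factorial : ℚ) ≠ 0 := by positivity
  have h4 : ((2*k+2).factorial : ℚ) ≠ 0 := by positivity
  have h5 : ((2*m).factorial : ℚ) ≠ 0 := by positivity
  have h6 : ((2*k+2*m+4).factorial : ℚ) ≠ 0 := by positivity
  push_cast
  field_simp
  ring
end

section
/- For all n ≥ 1, the sum s_n = Σ_{k=0}^{n-1} C(n+1,k+1)/C(2n+2,2k+2) satisfies s_n ≤ 2/n. -/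
open Finset Nat

private lemma fact_ne (m : ℕ) : ((Nat.factorial m : ℚ)) ≠ 0 := by
  exact_mod_cast (Nat.factorial_pos m).ne'

private lemma fact_add_one (m : ℕ) : (Nat.factorial (m + 1) : ℚ) = (m + 1) * Nat.factorial m := by
  rw [Nat.factorial_succ]; push_cast; ring

private lemma fact_add_two (m : ℕ) :
    (Nat.factorial (m + 2) : ℚ) = (m + 2) * (m + 1) * Nat.factorial m := by
  rw [show m + 2 = (m + 1) + 1 from rfl, Nat.factorial_succ, Nat.factorial_succ]
  push_cast; ring

/-- Key cross-multiplied identity. -/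
private lemma key (k j : ℕ) :
    (2 * (k + j) + 3 : ℚ) * ((k + j + 2).choose (k + 1) : ℚ)
        * ((2 * (k + j) + 2).choose (2 * k + 2) : ℚ)
      = (2 * j + 1 : ℚ) * ((k + j + 1).choose (k + 1) : ℚ)
        * ((2 * (k + j) + 4).choose (2 * k + 2) : ℚ) := by
  rw [Nat.cast_choose ℚ (by omega : k + 1 ≤ k + j + 2),
      Nat.cast_choose ℚ (by omega : 2 * k + 2 ≤ 2 * (k + j) + 2),
      Nat.cast_choose ℚ (by omega : k + 1 ≤ k + j + 1),
      Nat.cast_choose ℚ (by omega : 2 * k + 2 ≤ 2 * (k + j) + 4)]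
  rw [show k + j + 2 - (k + 1) = j + 1 by omega,
      show 2 * (k + j) + 2 - (2 * k + 2) = 2 * j by omega,
      show k + j + 1 - (k + 1) = j by omega,
      show 2 * (k + j) + 4 - (2 * k + 2) = 2 * j + 2 by omega]
  rw [show (k + j + 2) = (k + j + 1) + 1 from rfl, fact_add_one (k + j + 1),
      show (2 * (k + j) + 4) = (2 * (k + j) + 2) + 2 by ring, fact_add_two (2 * (k + j) + 2),
      show (j + 1) = j + 1 from rfl, fact_add_one j,
      show (2 * j + 2) = (2 * j) + 2 from rfl, fact_add_two (2 * j)]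
  have n1 := fact_ne (k + 1)
  have n2 := fact_ne (2 * k + 2)
  have n3 := fact_ne j
  have n4 := fact_ne (2 * j)
  have n5 := fact_ne (k + j + 1)
  have n6 := fact_ne (2 * (k + j) + 2)
  field_simp
  push_cast
  ring

private lemma choose_pos_cast {a b : ℕ} (h : a ≤ b) : (0 : ℚ) < (b.choose a : ℚ) := by
  exact_mod_cast Nat.choose_pos h

/-- termwise step: (2n+3) * a(n+1,k) = (2(n-k)+1) * a(n,k) for k < n. -/
private lemma term_step (n k : ℕ) (hk : k < n) :
    (2 * n + 3 : ℚ) * (((n + 2).choose (k + 1) : ℚ) / ((2 * n + 4).choose (2 * k + 2) : ℚ))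
      = ((2 * (n - k) + 1 : ℕ) : ℚ)
        * (((n + 1).choose (k + 1) : ℚ) / ((2 * n + 2).choose (2 * k + 2) : ℚ)) := by
  have h := key k (n - k)
  rw [show k + (n - k) = n by omega] at h
  have h1 : (0 : ℚ) < ((2 * n + 2).choose (2 * k + 2) : ℚ) :=
    choose_pos_cast (by omega)
  have h2 : (0 : ℚ) < ((2 * n + 4).choose (2 * k + 2) : ℚ) :=
    choose_pos_cast (by omega)
  rw [mul_div_assoc', mul_div_assoc', div_eq_div_iff h2.ne' h1.ne']
  push_cast [Nat.cast_sub hk.le] at h ⊢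
  linear_combination h

/-- symmetry of the term a(n, ·). -/
private lemma term_symm (n k : ℕ) (hk : k < n) :
    ((n + 1).choose ((n - 1 - k) + 1) : ℚ) / ((2 * n + 2).choose (2 * (n - 1 - k) + 2) : ℚ)
      = ((n + 1).choose (k + 1) : ℚ) / ((2 * n + 2).choose (2 * k + 2) : ℚ) := by
  rw [show (n - 1 - k) + 1 = (n + 1) - (k + 1) by omega,
      show 2 * (n - 1 - k) + 2 = (2 * n + 2) - (2 * k + 2) by omega,
      Nat.choose_symm (by omega), Nat.choose_symm (by omega)]

/-- the recurrence: (2n+3) * S(n+1) = (n+2) * S n + 1. -/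
private lemma recur (n : ℕ) :
    (2 * n + 3 : ℚ)
        * (∑ k ∈ range (n + 1),
            ((n + 2).choose (k + 1) : ℚ) / ((2 * n + 4).choose (2 * k + 2) : ℚ))
      = (n + 2) * (∑ k ∈ range n,
            ((n + 1).choose (k + 1) : ℚ) / ((2 * n + 2).choose (2 * k + 2) : ℚ)) + 1 := by
  rw [Finset.sum_range_succ, mul_add]
  have hlast : ((n + 2).choose (n + 1) : ℚ) / ((2 * n + 4).choose (2 * n + 2) : ℚ)
      = 1 / (2 * n + 3) := by
    rw [show (n + 1 : ℕ) = (n + 2) - 1 by omega, Nat.choose_symm (by omega),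
        Nat.choose_one_right,
        show (2 * n + 2 : ℕ) = (2 * n + 4) - 2 by omega, Nat.choose_symm (by omega),
        Nat.choose_two_right,
        show (2 * n + 4) * (2 * n + 4 - 1) = 2 * ((n + 2) * (2 * n + 3)) by
          rw [show 2 * n + 4 - 1 = 2 * n + 3 by omega]; ring,
        Nat.mul_div_cancel_left _ (by norm_num)]
    push_cast
    rw [div_eq_div_iff (by positivity) (by positivity)]
    ring
  rw [hlast]
  have hmain : (2 * n + 3 : ℚ)
        * (∑ k ∈ range n,
            ((n + 2).choose (k + 1) : ℚ) / ((2 * n + 4).choose (2 * k + 2) : ℚ))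
      = ∑ k ∈ range n, ((2 * (n - k) + 1 : ℕ) : ℚ)
            * (((n + 1).choose (k + 1) : ℚ) / ((2 * n + 2).choose (2 * k + 2) : ℚ)) := by
    rw [Finset.mul_sum]
    exact Finset.sum_congr rfl fun k hk => term_step n k (Finset.mem_range.mp hk)
  rw [hmain]
  set X := ∑ k ∈ range n, ((2 * (n - k) + 1 : ℕ) : ℚ)
      * (((n + 1).choose (k + 1) : ℚ) / ((2 * n + 2).choose (2 * k + 2) : ℚ)) with hX
  have hrefl : X = ∑ k ∈ range n, ((2 * k + 3 : ℕ) : ℚ)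
      * (((n + 1).choose (k + 1) : ℚ) / ((2 * n + 2).choose (2 * k + 2) : ℚ)) := by
    rw [hX, ← Finset.sum_range_reflect]
    refine Finset.sum_congr rfl fun k hk => ?_
    have hk' := Finset.mem_range.mp hk
    rw [term_symm n k hk', show n - (n - 1 - k) = k + 1 by omega,
        show 2 * (k + 1) + 1 = 2 * k + 3 by ring]
  have hsum : X + X = (2 * n + 4 : ℚ) * ∑ k ∈ range n,
      (((n + 1).choose (k + 1) : ℚ) / ((2 * n + 2).choose (2 * k + 2) : ℚ)) := by
    nth_rewrite 2 [hrefl]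
    rw [hX, ← Finset.sum_add_distrib, Finset.mul_sum]
    refine Finset.sum_congr rfl fun k hk => ?_
    have hk' := Finset.mem_range.mp hk
    have : ((2 * (n - k) + 1 : ℕ) : ℚ) + ((2 * k + 3 : ℕ) : ℚ) = 2 * n + 4 := by
      push_cast [Nat.cast_sub hk'.le]
      ring
    rw [← add_mul, this]
  have : X = (n + 2) * ∑ k ∈ range n,
      (((n + 1).choose (k + 1) : ℚ) / ((2 * n + 2).choose (2 * k + 2) : ℚ)) := by
    linarith [hsum]
  rw [this]
  field_simp

theorem s_le_two_div_n :
    ∀ n : ℕ, 1 ≤ n →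
      (∑ k ∈ Finset.range n,
        (Nat.choose (n + 1) (k + 1) : ℚ) / (Nat.choose (2 * n + 2) (2 * k + 2) : ℚ))
        ≤ 2 / (n : ℚ) := by
  have main : ∀ n : ℕ, 3 ≤ n →
      (∑ k ∈ Finset.range n,
        (Nat.choose (n + 1) (k + 1) : ℚ) / (Nat.choose (2 * n + 2) (2 * k + 2) : ℚ))
        ≤ 2 / (n : ℚ) := by
    intro n hn
    induction n, hn using Nat.le_induction with
    | base =>
        rw [show (3 : ℕ) = 2 + 1 from rfl, Finset.sum_range_succ, Finset.sum_range_succ,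
          Finset.sum_range_succ, Finset.sum_range_zero]
        norm_num [Nat.choose]
    | succ n hn ih =>
        have hrec := recur n
        rw [show 2 * n + 4 = 2 * (n + 1) + 2 by ring, show n + 2 = (n + 1) + 1 by ring] at hrec
        set S := ∑ k ∈ Finset.range (n + 1),
          ((n + 1 + 1).choose (k + 1) : ℚ) / ((2 * (n + 1) + 2).choose (2 * k + 2) : ℚ) with hS
        have hn' : (3 : ℚ) ≤ (n : ℚ) := by exact_mod_cast hn
        have hnpos : (0 : ℚ) < n := by linarith
        have hSn : (∑ k ∈ Finset.range n,
            ((n + 1).choose (k + 1) : ℚ) / ((2 * n + 2).choose (2 * k + 2) : ℚ)) ≤ 2 / n := ih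
        have h1 : (2 * (n : ℚ) + 3) * S ≤ ((n : ℚ) + 2) * (2 / n) + 1 := by
          rw [hrec]
          nlinarith [hSn, hn']
        have h2 : (0 : ℚ) < 2 * (n : ℚ) + 3 := by linarith
        have h3 : S ≤ (((n : ℚ) + 2) * (2 / n) + 1) / (2 * n + 3) :=
          (le_div_iff₀ h2).mpr (by linarith [h1])
        refine h3.trans ?_
        have e1 : ((n : ℚ) + 2) * (2 / n) + 1 = (3 * n + 4) / n := by
          field_simp; ring
        rw [e1, div_div]
        rw [div_le_div_iff₀ (by positivity) (by push_cast; linarith)]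
        push_cast
        nlinarith [hn']
  intro n hn
  by_cases h3 : 3 ≤ n
  · exact main n h3
  · interval_cases n
    · norm_num [Finset.sum_range_succ, Nat.choose]
    · norm_num [Finset.sum_range_succ, Nat.choose]
end

section
/- Define h_0 = 1 and h_n = (2n+1)!! − Σ_{k=0}^{n−1} (2k+1)!!·h_{n−1−k} for n ≥ 1. Then for all n ≥ 1, h_n ≥ (2n+1)!!·(n−2)/n. -/
open Nat

lemma dfA : ∀ k m : ℕ, (2*k+1)‼ * (2*m+1)‼ ≤ (2*(k+m)+1)‼ := by
  intro k
  induction k with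
  | zero => intro m; simp [Nat.doubleFactorial]
  | succ k ih =>
    intro m
    have e1 : 2*(k+1)+1 = 2*k+1+2 := by ring
    have e2 : 2*(k+1+m)+1 = 2*(k+m)+1+2 := by ring
    rw [e1, e2, Nat.doubleFactorial_add_two, Nat.doubleFactorial_add_two]
    calc (2*k+1+2) * (2*k+1)‼ * (2*m+1)‼ = (2*k+1+2) * ((2*k+1)‼ * (2*m+1)‼) := by ring
    _ ≤ (2*k+1+2) * (2*(k+m)+1)‼ := Nat.mul_le_mul_left _ (ih m)
    _ ≤ (2*(k+m)+1+2) * (2*(k+m)+1)‼ := Nat.mul_le_mul_right _ (by omega)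

lemma dfB : ∀ m k : ℕ, (2*(k+1)+1)‼ * (2*(m+1)+1)‼ ≤ 3 * (2*(k+m+1)+1)‼ := by
  intro m
  induction m with
  | zero =>
    intro k
    have : (2*(0+1)+1)‼ = 3 := by decide
    rw [this]
    simp [Nat.mul_comm]
  | succ m ih =>
    intro k
    have e1 : 2*(m+1+1)+1 = 2*(m+1)+1+2 := by ring
    have e2 : 2*(k+(m+1)+1)+1 = 2*(k+m+1)+1+2 := by ring
    rw [e1, e2, Nat.doubleFactorial_add_two, Nat.doubleFactorial_add_two]
    calc (2*(k+1)+1)‼ * ((2*(m+1)+1+2) * (2*(m+1)+1)‼)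
        = (2*(m+1)+1+2) * ((2*(k+1)+1)‼ * (2*(m+1)+1)‼) := by ring
    _ ≤ (2*(m+1)+1+2) * (3 * (2*(k+m+1)+1)‼) := Nat.mul_le_mul_left _ (ih k)
    _ ≤ (2*(k+m+1)+1+2) * (3 * (2*(k+m+1)+1)‼) := Nat.mul_le_mul_right _ (by omega)
    _ = 3 * ((2*(k+m+1)+1+2) * (2*(k+m+1)+1)‼) := by ring

lemma dfB' : ∀ p q : ℕ, 1 ≤ p → 1 ≤ q → (2*p+1)‼ * (2*q+1)‼ ≤ 3 * (2*(p+q-1)+1)‼ := by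
  intro p q hp hq
  obtain ⟨k, rfl⟩ := Nat.exists_eq_add_of_le hp
  obtain ⟨m, rfl⟩ := Nat.exists_eq_add_of_le hq
  have e : 1+k+(1+m)-1 = k+m+1 := by omega
  rw [e]
  have e1 : 2*(1+k)+1 = 2*(k+1)+1 := by ring
  have e2 : 2*(1+m)+1 = 2*(m+1)+1 := by ring
  rw [e1, e2]; exact dfB m k

lemma sumB : ∀ n : ℕ, 1 ≤ n →
    n * (∑ k ∈ Finset.range n, (2*k+1)‼ * (2*(n-1-k)+1)‼) ≤ 2 * (2*n+1)‼ := by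
  intro n hn
  match n, hn with
  | 1, _ => decide
  | (m+2), _ =>
    have hsplit : (∑ k ∈ Finset.range (m+2), (2*k+1)‼ * (2*(m+2-1-k)+1)‼)
        ≤ 2 * (2*(m+1)+1)‼ + m * (3 * (2*m+1)‼) := by
      rw [Finset.sum_range_succ, Finset.sum_range_succ']
      have h0 : (2*0+1)‼ * (2*(m+2-1-0)+1)‼ = (2*(m+1)+1)‼ := by
        norm_num [Nat.doubleFactorial]
      have hl : (2*(m+1)+1)‼ * (2*(m+2-1-(m+1))+1)‼ = (2*(m+1)+1)‼ := by
        norm_num [Nat.doubleFactorial]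
      rw [h0, hl]
      have hmid : (∑ k ∈ Finset.range m, (2*(k+1)+1)‼ * (2*(m+2-1-(k+1))+1)‼)
          ≤ m * (3 * (2*m+1)‼) := by
        calc _ ≤ ∑ _k ∈ Finset.range m, 3 * (2*m+1)‼ := by
              apply Finset.sum_le_sum
              intro k hk
              have hk' : k < m := Finset.mem_range.mp hk
              have e : m+2-1-(k+1) = m-k := by omega
              rw [e]
              have := dfB' (k+1) (m-k) (by omega) (by omega)
              have e2 : k+1+(m-k)-1 = m := by omega
              rwa [e2] at this
          _ = m * (3 * (2*m+1)‼) := by rw [Finset.sum_const, Finset.card_range, smul_eq_mul]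
      omega
    have key : (m+2) * (2 * (2*(m+1)+1)‼ + m * (3 * (2*m+1)‼)) ≤ 2 * (2*(m+2)+1)‼ := by
      have e1 : 2*(m+1)+1 = 2*m+1+2 := by ring
      have e2 : 2*(m+2)+1 = 2*m+1+2+2 := by ring
      rw [e1, e2, Nat.doubleFactorial_add_two, Nat.doubleFactorial_add_two,
        Nat.doubleFactorial_add_two]
      set D := (2*m+1)‼ with hD
      have l : (m+2) * (2 * ((2*m+1+2) * D) + m * (3 * D)) = (7*m^2+20*m+12) * D := by ring
      have r : 2 * ((2*m+1+2+2) * ((2*m+1+2) * D)) = (8*m^2+32*m+30) * D := by ring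
      rw [l, r]
      exact Nat.mul_le_mul_right _ (by nlinarith)
    calc (m+2) * _ ≤ (m+2) * (2 * (2*(m+1)+1)‼ + m * (3 * (2*m+1)‼)) :=
          Nat.mul_le_mul_left _ hsplit
      _ ≤ 2 * (2*(m+2)+1)‼ := key

open Nat in
theorem lodgepole_lower_bound (h : ℕ → ℤ)
    (h0 : h 0 = 1)
    (hrec : ∀ n : ℕ, 1 ≤ n → h n = ((2 * n + 1)‼ : ℤ)
      - ∑ k ∈ Finset.range n, ((2 * k + 1)‼ : ℤ) * h (n - 1 - k)) :
    ∀ n : ℕ, 1 ≤ n → ((2 * n + 1)‼ : ℚ) * ((n : ℚ) - 2) / (n : ℚ) ≤ (h n : ℚ) := by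
  -- first: 0 ≤ h n ∧ h n ≤ (2n+1)‼
  have bound : ∀ n : ℕ, 0 ≤ h n ∧ h n ≤ ((2*n+1)‼ : ℤ) := by
    intro n
    induction n using Nat.strong_induction_on with
    | _ n ih =>
      rcases Nat.eq_zero_or_pos n with rfl | hn
      · simp [h0, Nat.doubleFactorial]
      · rw [hrec n hn]
        have hT0 : (0:ℤ) ≤ ∑ k ∈ Finset.range n, ((2*k+1)‼ : ℤ) * h (n-1-k) := by
          apply Finset.sum_nonneg
          intro k hk
          exact mul_nonneg (by positivity) (ih (n-1-k) (by omega)).1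
        have hTS : (∑ k ∈ Finset.range n, ((2*k+1)‼ : ℤ) * h (n-1-k))
            ≤ ((∑ k ∈ Finset.range n, (2*k+1)‼ * (2*(n-1-k)+1)‼ : ℕ) : ℤ) := by
          push_cast
          apply Finset.sum_le_sum
          intro k hk
          exact mul_le_mul_of_nonneg_left (ih (n-1-k) (by omega)).2 (by positivity)
        have hSa : (∑ k ∈ Finset.range n, (2*k+1)‼ * (2*(n-1-k)+1)‼ : ℕ) ≤ (2*n+1)‼ := by
          rcases Nat.lt_or_ge n 2 with h2 | h2
          · interval_cases n
            · decide
          · have := sumB n hn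
            have h2a : 2 * (2*n+1)‼ ≤ n * (2*n+1)‼ := Nat.mul_le_mul_right _ h2
            exact Nat.le_of_mul_le_mul_left (le_trans this h2a) (by omega)
        constructor
        · have : (∑ k ∈ Finset.range n, ((2*k+1)‼ : ℤ) * h (n-1-k)) ≤ ((2*n+1)‼ : ℤ) :=
            le_trans hTS (by exact_mod_cast hSa)
          linarith
        · linarith
  -- integer key inequality
  have key : ∀ n : ℕ, 1 ≤ n → ((2*n+1)‼ : ℤ) * ((n:ℤ) - 2) ≤ (n:ℤ) * h n := by
    intro n hn
    rw [hrec n hn]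
    have hTS : (∑ k ∈ Finset.range n, ((2*k+1)‼ : ℤ) * h (n-1-k))
        ≤ ((∑ k ∈ Finset.range n, (2*k+1)‼ * (2*(n-1-k)+1)‼ : ℕ) : ℤ) := by
      push_cast
      apply Finset.sum_le_sum
      intro k hk
      exact mul_le_mul_of_nonneg_left (bound (n-1-k)).2 (by positivity)
    have hnS : (n:ℤ) * ((∑ k ∈ Finset.range n, (2*k+1)‼ * (2*(n-1-k)+1)‼ : ℕ) : ℤ)
        ≤ 2 * ((2*n+1)‼ : ℤ) := by exact_mod_cast sumB n hn
    have hn0 : (0:ℤ) ≤ (n:ℤ) := by positivity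
    nlinarith
  intro n hn
  have hn0 : (0:ℚ) < (n:ℚ) := by exact_mod_cast hn
  rw [div_le_iff₀ hn0]
  have := key n hn
  have : (((2*n+1)‼ : ℤ) * ((n:ℤ) - 2) : ℚ) ≤ (((n:ℤ) * h n : ℤ) : ℚ) := by exact_mod_cast this
  push_cast at this
  linarith
end

section
/- Define h_0 = 1 and h_n = (2n+1)!! − Σ_{k=0}^{n−1} (2k+1)!!·h_{n−1−k} for n ≥ 1. Then h_n / (2n+1)!! → 1 as n → ∞, i.e., h_n ∼ (2n+1)!!. -/
open Nat in
lemma lodgepole_DF1 : ∀ b a : ℕ, (2*a+1)‼ * (2*b+1)‼ ≤ (2*(a+b)+1)‼ := by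
  intro b
  induction b with
  | zero => intro a; simp
  | succ b ih =>
    intro a
    have h1 : 2*(b+1)+1 = (2*b+1)+2 := by ring
    have h2 : 2*(a+(b+1))+1 = (2*(a+b)+1)+2 := by ring
    rw [h1, h2, Nat.doubleFactorial_add_two, Nat.doubleFactorial_add_two]
    calc (2*a+1)‼ * ((2*b+1+2) * (2*b+1)‼)
        = (2*b+1+2) * ((2*a+1)‼ * (2*b+1)‼) := by ring
      _ ≤ (2*(a+b)+1+2) * (2*(a+b)+1)‼ := Nat.mul_le_mul (by omega) (ih a)

open Nat in
lemma lodgepole_DF2 : ∀ b a : ℕ, (2*a+3)‼ * (2*b+3)‼ ≤ 3 * (2*(a+b)+3)‼ := by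
  intro b
  induction b with
  | zero => intro a; simp [Nat.doubleFactorial]; omega
  | succ b ih =>
    intro a
    have h1 : 2*(b+1)+3 = (2*b+3)+2 := by ring
    have h2 : 2*(a+(b+1))+3 = (2*(a+b)+3)+2 := by ring
    rw [h1, h2, Nat.doubleFactorial_add_two, Nat.doubleFactorial_add_two]
    calc (2*a+3)‼ * ((2*b+3+2) * (2*b+3)‼)
        = (2*b+3+2) * ((2*a+3)‼ * (2*b+3)‼) := by ring
      _ ≤ (2*(a+b)+3+2) * (3 * (2*(a+b)+3)‼) := Nat.mul_le_mul (by omega) (ih a)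
      _ = 3 * ((2*(a+b)+3+2) * (2*(a+b)+3)‼) := by ring

open Nat in
lemma lodgepole_hbounds (h : ℕ → ℤ) (h0 : h 0 = 1)
    (hrec : ∀ n : ℕ, 1 ≤ n → h n = ((2 * n + 1)‼ : ℤ)
      - ∑ k ∈ Finset.range n, ((2 * k + 1)‼ : ℤ) * h (n - 1 - k)) :
    ∀ n, 0 ≤ h n ∧ h n ≤ ((2*n+1)‼ : ℤ) := by
  intro n
  induction n using Nat.strong_induction_on with
  | _ n ih =>
    match n with
    | 0 => simp [h0]
    | (m+1) =>
      have hr := hrec (m+1) (by omega)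
      have hidx : ∀ k, m + 1 - 1 - k = m - k := by intro k; omega
      have hT0 : 0 ≤ ∑ k ∈ Finset.range (m+1), ((2*k+1)‼ : ℤ) * h (m+1-1-k) := by
        apply Finset.sum_nonneg
        intro k hk
        exact mul_nonneg (by positivity) ((ih (m+1-1-k) (by omega)).1)
      have hTle : ∑ k ∈ Finset.range (m+1), ((2*k+1)‼ : ℤ) * h (m+1-1-k)
          ≤ (m+1 : ℤ) * ((2*m+1)‼ : ℤ) := by
        calc ∑ k ∈ Finset.range (m+1), ((2*k+1)‼ : ℤ) * h (m+1-1-k)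
            ≤ ∑ _k ∈ Finset.range (m+1), ((2*m+1)‼ : ℤ) := by
              apply Finset.sum_le_sum
              intro k hk
              have hk' : k ≤ m := by
                have := Finset.mem_range.mp hk; omega
              have h1 : h (m+1-1-k) ≤ ((2*(m-k)+1)‼ : ℤ) := by
                rw [hidx k]; exact (ih (m-k) (by omega)).2
              calc ((2*k+1)‼:ℤ) * h (m+1-1-k)
                  ≤ ((2*k+1)‼:ℤ) * ((2*(m-k)+1)‼:ℤ) :=
                    mul_le_mul_of_nonneg_left h1 (by positivity)
                _ ≤ ((2*(k+(m-k))+1)‼:ℤ) := by exact_mod_cast lodgepole_DF1 _ _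
                _ = ((2*m+1)‼:ℤ) := by rw [Nat.add_sub_cancel' hk']
          _ = (m+1 : ℤ) * ((2*m+1)‼ : ℤ) := by
              simp [Finset.sum_const, mul_comm]
      have hD : ((2*(m+1)+1)‼ : ℤ) = (2*m+3 : ℤ) * ((2*m+1)‼ : ℤ) := by
        have : 2*(m+1)+1 = (2*m+1)+2 := by ring
        rw [this, Nat.doubleFactorial_add_two]
        push_cast; ring
      constructor
      · rw [hr]
        have hP : (0:ℤ) ≤ ((2*m+1)‼ : ℤ) := by positivity
        nlinarith [hTle]
      · rw [hr]; linarith [hT0]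

open Nat in
lemma lodgepole_lower (h : ℕ → ℤ) (h0 : h 0 = 1)
    (hrec : ∀ n : ℕ, 1 ≤ n → h n = ((2 * n + 1)‼ : ℤ)
      - ∑ k ∈ Finset.range n, ((2 * k + 1)‼ : ℤ) * h (n - 1 - k)) (m : ℕ) :
    ((m+2 : ℕ) - 4 : ℤ) * ((2*(m+2)+1)‼ : ℤ) ≤ (m+2 : ℤ) * h (m+2) := by
  have hb := lodgepole_hbounds h h0 hrec
  have hr := hrec (m+2) (by omega)
  set f : ℕ → ℤ := fun k => ((2*k+1)‼ : ℤ) * h (m+2-1-k) with hf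
  have hsplit : ∑ k ∈ Finset.range (m+2), f k
      = (∑ k ∈ Finset.range m, f (k+1) + f 0) + f (m+1) := by
    rw [Finset.sum_range_succ, Finset.sum_range_succ']
  have hf0 : f 0 ≤ ((2*m+3)‼ : ℤ) := by
    have := (hb (m+1)).2
    have e : 2*(m+1)+1 = 2*m+3 := by ring
    simp only [hf]
    simpa [show m+2-1-0 = m+1 by omega, e] using this
  have hflast : f (m+1) = ((2*m+3)‼ : ℤ) := by
    simp only [hf]
    rw [show m+2-1-(m+1) = 0 by omega, h0, show 2*(m+1)+1 = 2*m+3 by ring]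
    ring
  have hmid : ∑ k ∈ Finset.range m, f (k+1) ≤ (m : ℤ) * (3 * ((2*m+1)‼ : ℤ)) := by
    calc ∑ k ∈ Finset.range m, f (k+1)
        ≤ ∑ _k ∈ Finset.range m, (3 * ((2*m+1)‼ : ℤ)) := by
          apply Finset.sum_le_sum
          intro k hk
          have hk' : k < m := Finset.mem_range.mp hk
          have hidx : m+2-1-(k+1) = m-k := by omega
          have h1 : h (m+2-1-(k+1)) ≤ ((2*(m-k)+1)‼ : ℤ) := by
            rw [hidx]; exact (hb (m-k)).2
          have e2 : 2*(m-k)+1 = 2*(m-k-1)+3 := by omega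
          calc f (k+1) ≤ ((2*(k+1)+1)‼:ℤ) * ((2*(m-k)+1)‼:ℤ) :=
                mul_le_mul_of_nonneg_left h1 (by positivity)
            _ = ((2*k+3)‼:ℤ) * ((2*(m-k-1)+3)‼:ℤ) := by
                rw [e2, show 2*(k+1)+1 = 2*k+3 by ring]
            _ ≤ 3 * ((2*(k+(m-k-1))+3)‼:ℤ) := by exact_mod_cast lodgepole_DF2 _ _
            _ = 3 * ((2*m+1)‼:ℤ) := by rw [show 2*(k+(m-k-1))+3 = 2*m+1 by omega]
      _ = (m : ℤ) * (3 * ((2*m+1)‼ : ℤ)) := by simp [mul_comm]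
  have hP : (0:ℤ) ≤ ((2*m+1)‼ : ℤ) := by positivity
  have hD3 : ((2*m+3)‼ : ℤ) = (2*m+3 : ℤ) * ((2*m+1)‼ : ℤ) := by
    rw [show 2*m+3 = (2*m+1)+2 by ring, Nat.doubleFactorial_add_two]; push_cast; ring
  have hD5 : ((2*(m+2)+1)‼ : ℤ) = (2*m+5 : ℤ) * ((2*m+3)‼ : ℤ) := by
    rw [show 2*(m+2)+1 = (2*m+3)+2 by ring, Nat.doubleFactorial_add_two]; push_cast; ring
  have hT : ∑ k ∈ Finset.range (m+2), f k
      ≤ 2 * ((2*m+3)‼ : ℤ) + (m:ℤ) * (3 * ((2*m+1)‼ : ℤ)) := by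
    rw [hsplit, hflast]; linarith
  have hh : h (m+2) = ((2*(m+2)+1)‼ : ℤ) - ∑ k ∈ Finset.range (m+2), f k := hr
  rw [hh]
  push_cast
  nlinarith [hT, hP, hD3, hD5]

open Nat Filter in
theorem lodgepole_asymptotic (h : ℕ → ℤ)
    (h0 : h 0 = 1)
    (hrec : ∀ n : ℕ, 1 ≤ n → h n = ((2 * n + 1)‼ : ℤ)
      - ∑ k ∈ Finset.range n, ((2 * k + 1)‼ : ℤ) * h (n - 1 - k)) :
    Tendsto (fun n : ℕ => (h n : ℝ) / ((2 * n + 1)‼ : ℝ)) atTop (nhds 1) := by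
  have hb := lodgepole_hbounds h h0 hrec
  have hlow : Tendsto (fun n : ℕ => 1 - 4 / (n : ℝ)) atTop (nhds 1) := by
    have h4 : Tendsto (fun n : ℕ => 4 / (n : ℝ)) atTop (nhds 0) :=
      tendsto_const_nhds.div_atTop tendsto_natCast_atTop_atTop
    simpa using tendsto_const_nhds.sub h4
  apply tendsto_of_tendsto_of_tendsto_of_le_of_le' hlow tendsto_const_nhds
  · -- lower bound eventually
    filter_upwards [eventually_ge_atTop 2] with n hn
    obtain ⟨m, rfl⟩ : ∃ m, n = m + 2 := ⟨n - 2, by omega⟩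
    have hkey := lodgepole_lower h h0 hrec m
    have hDpos : (0:ℝ) < ((2*(m+2)+1)‼ : ℝ) := by positivity
    have hnpos : (0:ℝ) < ((m+2 : ℕ) : ℝ) := by positivity
    rw [show (1 : ℝ) - 4 / ((m+2 : ℕ) : ℝ) = (((m+2:ℕ):ℝ) - 4) / ((m+2:ℕ):ℝ) by
      field_simp]
    rw [div_le_div_iff₀ hnpos hDpos]
    have : (((m+2:ℕ):ℝ) - 4) * ((2*(m+2)+1)‼ : ℝ) ≤ ((m+2:ℕ):ℝ) * (h (m+2) : ℝ) := by
      exact_mod_cast hkey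
    calc (((m+2:ℕ):ℝ) - 4) * ((2*(m+2)+1)‼ : ℝ)
        ≤ ((m+2:ℕ):ℝ) * (h (m+2) : ℝ) := this
      _ = (h (m+2) : ℝ) * ((m+2:ℕ):ℝ) := by ring
  · -- upper bound
    filter_upwards with n
    have hDpos : (0:ℝ) < ((2*n+1)‼ : ℝ) := by positivity
    rw [div_le_one hDpos]
    exact_mod_cast (hb n).2
end

section
/- Define h_n by the formula h_n = Σ_{(a_1,…,a_n) ∈ V_n} Π_{i=1}^n a_i, where V_n is the set of integer vectors with a_1 = 2 and 2 ≤ a_i ≤ a_{i−1} + 1 for 2 ≤ i ≤ n. Then this h_n coincides with the sequence defined by h_0 = 1 and h_n = (2n+1)!! − Σ_{k=0}^{n−1} (2k+1)!!·h_{n−1−k}. -/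
/-- The set `V_n` of integer vectors `(a_1, …, a_n)` with `a_1 = 2` and
`2 ≤ a_i ≤ a_{i-1} + 1` for `2 ≤ i ≤ n` (indices here are `0`-based). -/
def Vset (n : ℕ) : Finset (Fin n → ℕ) :=
  (Fintype.piFinset fun _ : Fin n => Finset.Icc 2 (n + 1)).filter
    (fun a => (∀ i : Fin n, (i : ℕ) = 0 → a i = 2) ∧
      ∀ i j : Fin n, (j : ℕ) + 1 = (i : ℕ) → 2 ≤ a i ∧ a i ≤ a j + 1)

namespace VsetAux

open Nat Finset

/-- Sum of products over chains with entries ≥ 2, first entry ≤ m+1. -/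
def T : ℕ → ℕ → ℕ
  | 0, _ => 1
  | n+1, m => ∑ a ∈ Finset.Icc 2 (m+1), a * T n a

/-- Sum of products over chains with entries ≥ 1, first entry ≤ m+1. -/
def S : ℕ → ℕ → ℕ
  | 0, _ => 1
  | n+1, m => ∑ a ∈ Finset.Icc 1 (m+1), a * S n a

lemma sum_choose_aux (n m : ℕ) :
    ∑ a ∈ Icc 1 (m+1), a * Nat.choose (a + 2*n) (2*n)
      = (2*n+1) * Nat.choose (m + 2*n + 2) (2*n+2) := by
  induction m with
  | zero =>
    rw [show (0:ℕ)+1 = 1 from rfl, Finset.Icc_self, Finset.sum_singleton, one_mul,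
      show (1:ℕ)+2*n = 2*n+1 by omega, Nat.choose_succ_self_right,
      show (0:ℕ)+2*n+2 = 2*n+2 by omega, Nat.choose_self, mul_one]
  | succ m ih =>
    rw [Finset.sum_Icc_succ_top (by omega), ih]
    have key : (Nat.choose (m + 2*n + 2) (2*n+1)) * (2*n+1)
        = Nat.choose (m + 2*n + 2) (2*n) * (m + 2) := by
      have := Nat.choose_succ_right_eq (m + 2*n + 2) (2*n)
      rwa [show m + 2*n + 2 - 2*n = m + 2 by omega] at this
    have pas : Nat.choose (m + 1 + 2*n + 2) (2*n+2)
        = Nat.choose (m + 2*n + 2) (2*n+1) + Nat.choose (m + 2*n + 2) (2*n+2) := by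
      rw [show m + 1 + 2*n + 2 = (m + 2*n + 2) + 1 by omega]
      exact Nat.choose_succ_succ _ _
    rw [pas, show m + 1 + 1 + 2*n = m + 2*n + 2 by omega]
    nlinarith [key]

lemma doubleFactorial_odd_succ (n : ℕ) : (2*n+1)‼ = (2*n+1) * (2*n-1)‼ := by
  cases n with
  | zero => simp [Nat.doubleFactorial]
  | succ k =>
    rw [show 2*(k+1)+1 = (2*k+1)+2 by ring, Nat.doubleFactorial_add_two,
      show 2*(k+1)-1 = 2*k+1 by omega]

lemma S_closed (n : ℕ) : ∀ m, S n m = Nat.choose (m + 2*n) (2*n) * (2*n-1)‼ := by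
  induction n with
  | zero => intro m; simp [S]
  | succ n ih =>
    intro m
    rw [S]
    have : ∀ a ∈ Icc 1 (m+1), a * S n a = a * Nat.choose (a + 2*n) (2*n) * (2*n-1)‼ := by
      intro a _; rw [ih a]; ring
    rw [Finset.sum_congr rfl this, ← Finset.sum_mul, sum_choose_aux,
      show 2*(n+1)-1 = 2*n+1 by omega, show 2*(n+1) = 2*n+2 by ring,
      show m + (2*n+2) = m + 2*n + 2 by ring,
      doubleFactorial_odd_succ]
    ring

lemma S_one (n : ℕ) : S n 1 = (2*n+1)‼ := by
  rw [S_closed, show 1 + 2*n = 2*n+1 by ring, Nat.choose_succ_self_right,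
    doubleFactorial_odd_succ]

lemma S_split (n : ℕ) : ∀ m, S n m = T n m + ∑ k ∈ range n, T k m * S (n-1-k) 1 := by
  induction n with
  | zero => intro m; simp [S, T]
  | succ n ih =>
    intro m
    rw [S, T, Finset.sum_range_succ']
    have h1 : Icc 1 (m+1) = insert 1 (Icc 2 (m+1)) := by
      ext x; simp [Finset.mem_Icc, Finset.mem_insert]; omega
    rw [h1, Finset.sum_insert (by simp)]
    simp only [one_mul]
    have h2 : ∀ a ∈ Icc 2 (m+1), a * S n a
        = a * T n a + ∑ k ∈ range n, (a * T k a) * S (n-1-k) 1 := by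
      intro a _
      rw [ih a, Nat.mul_add, Finset.mul_sum]
      congr 1
      exact Finset.sum_congr rfl fun k _ => by ring
    rw [Finset.sum_congr rfl h2, Finset.sum_add_distrib]
    rw [Finset.sum_comm]
    have h3 : ∀ k ∈ range n, ∑ a ∈ Icc 2 (m+1), (a * T k a) * S (n-1-k) 1
        = T (k+1) m * S (n+1-1-(k+1)) 1 := by
      intro k hk
      rw [show n+1-1-(k+1) = n-1-k by omega, T, Finset.sum_mul]
    rw [Finset.sum_congr rfl h3, T]
    rw [show n+1-1-0 = n by omega, one_mul]
    omega

/-- The generalized chain set: first entry in [2, m+1], chain condition. -/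
def Cset (n m : ℕ) : Finset (Fin n → ℕ) :=
  (Fintype.piFinset fun _ : Fin n => Finset.Icc 2 (m + n)).filter
    (fun b => (∀ i : Fin n, (i : ℕ) = 0 → b i ≤ m + 1) ∧
      ∀ i j : Fin n, (j : ℕ) + 1 = (i : ℕ) → 2 ≤ b i ∧ b i ≤ b j + 1)

lemma chain_bound {n : ℕ} {b : Fin (n+1) → ℕ}
    (hc : ∀ i j : Fin (n+1), (j : ℕ) + 1 = (i : ℕ) → 2 ≤ b i ∧ b i ≤ b j + 1) :
    ∀ k : ℕ, ∀ hk : k < n+1, b ⟨k, hk⟩ ≤ b 0 + k := by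
  intro k
  induction k with
  | zero => intro hk; simp
  | succ k ih =>
    intro hk
    have hk' : k < n+1 := by omega
    have := (hc ⟨k+1, hk⟩ ⟨k, hk'⟩ rfl).2
    have := ih hk'
    omega

lemma cons_mem_Cset {n m : ℕ} (a : ℕ) (t : Fin n → ℕ) :
    Fin.cons a t ∈ Cset (n+1) m ↔ a ∈ Icc 2 (m+1) ∧ t ∈ Cset n a := by
  simp only [Cset, Finset.mem_filter, Fintype.mem_piFinset, Finset.mem_Icc]
  constructor
  · rintro ⟨hamb, hfirst, hchain⟩
    have ha0 : 2 ≤ a ∧ a ≤ m + 1 := by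
      have h1 := (hamb 0).1
      have h2 := hfirst 0 rfl
      simpa using ⟨h1, h2⟩
    refine ⟨ha0, ?_, ?_, ?_⟩
    · intro i
      have hb := chain_bound hchain ((i:ℕ)+1) (by omega)
      have h2 := hchain ⟨(i:ℕ)+1, by omega⟩ ⟨(i:ℕ), by omega⟩ rfl
      have he : (⟨(i:ℕ)+1, by omega⟩ : Fin (n+1)) = Fin.succ i := by
        ext; simp
      rw [he] at hb h2
      simp only [Fin.cons_succ, Fin.cons_zero] at hb h2
      exact ⟨h2.1, by omega⟩
    · intro i hi
      have := (hchain (Fin.succ i) 0 (by simp [hi])).2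
      simpa using this
    · intro i j hij
      have := hchain (Fin.succ i) (Fin.succ j) (by simp [Fin.val_succ]; omega)
      simpa using this
  · rintro ⟨⟨ha2, ham⟩, hamb, hfirst, hchain⟩
    refine ⟨?_, ?_, ?_⟩
    · intro i
      refine Fin.cases ?_ ?_ i
      · simp only [Fin.cons_zero]; omega
      · intro k
        have := hamb k
        simp only [Fin.cons_succ]
        omega
    · intro i hi
      have : i = 0 := Fin.ext hi
      subst this
      simpa using ham
    · rintro ⟨iv, hiv⟩ ⟨jv, hjv⟩ hij
      simp only [] at hij
      have hjn : jv < n := by omega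
      have hi2 : (⟨iv, hiv⟩ : Fin (n+1)) = Fin.succ ⟨jv, hjn⟩ := Fin.ext (by simp [Fin.val_succ]; omega)
      rw [hi2, Fin.cons_succ]
      rcases Nat.eq_zero_or_pos jv with hj0 | hjpos
      · subst hj0
        have hj : (⟨0, hjv⟩ : Fin (n+1)) = 0 := rfl
        rw [hj, Fin.cons_zero]
        exact ⟨(hamb _).1, hfirst _ rfl⟩
      · obtain ⟨w, rfl⟩ : ∃ w, jv = w + 1 := ⟨jv - 1, by omega⟩
        have hjn' : w < n := by omega
        have hj2 : (⟨w+1, hjv⟩ : Fin (n+1)) = Fin.succ ⟨w, hjn'⟩ := rfl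
        rw [hj2, Fin.cons_succ]
        exact hchain _ _ (by simp)

lemma Cset_sum (n : ℕ) : ∀ m, (∑ b ∈ Cset n m, ∏ i, b i) = T n m := by
  induction n with
  | zero =>
    intro m
    simp [Cset, T]
  | succ n ih =>
    intro m
    rw [T]
    have hrhs : ∑ a ∈ Icc 2 (m+1), a * T n a
        = ∑ p ∈ (Icc 2 (m+1)).sigma (fun a => Cset n a), p.1 * ∏ i, p.2 i := by
      rw [Finset.sum_sigma]
      exact Finset.sum_congr rfl fun a _ => by rw [← Finset.mul_sum, ih a]
    rw [hrhs]
    refine Finset.sum_nbij' (fun b => ⟨b 0, Fin.tail b⟩) (fun p => Fin.cons p.1 p.2)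
      ?_ ?_ ?_ ?_ ?_
    · intro b hb
      rw [Finset.mem_sigma]
      have := (cons_mem_Cset (b 0) (Fin.tail b)).1 (by rwa [Fin.cons_self_tail])
      exact ⟨this.1, this.2⟩
    · intro p hp
      rw [Finset.mem_sigma] at hp
      exact (cons_mem_Cset p.1 p.2).2 ⟨hp.1, hp.2⟩
    · intro b _; exact Fin.cons_self_tail b
    · intro p _; simp
    · intro b _
      rw [Fin.prod_univ_succ]
      rfl

lemma Vset_eq_Cset (n : ℕ) : Vset n = Cset n 1 := by
  unfold Vset Cset
  rw [show 1 + n = n + 1 by omega]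
  apply Finset.filter_congr
  intro b hb
  simp only [Fintype.mem_piFinset, Finset.mem_Icc] at hb
  constructor
  · rintro ⟨h1, h2⟩
    exact ⟨fun i hi => by rw [h1 i hi], h2⟩
  · rintro ⟨h1, h2⟩
    refine ⟨fun i hi => ?_, h2⟩
    have := (hb i).1
    have := h1 i hi
    omega

lemma key_nat (n : ℕ) :
    (2*n+1)‼ = T n 1 + ∑ k ∈ range n, (2*k+1)‼ * T (n-1-k) 1 := by
  have h1 := S_split n 1
  rw [S_one] at h1
  have h2 : ∀ k ∈ range n, T k 1 * S (n-1-k) 1 = T k 1 * (2*(n-1-k)+1)‼ :=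
    fun k _ => by rw [S_one]
  rw [Finset.sum_congr rfl h2] at h1
  rw [h1]
  congr 1
  rw [← Finset.sum_range_reflect (fun k => (2*k+1)‼ * T (n-1-k) 1) n]
  refine Finset.sum_congr rfl fun j hj => ?_
  simp only [Finset.mem_range] at hj
  rw [show n-1-(n-1-j) = j by omega, Nat.mul_comm]

end VsetAux

open VsetAux in
open Nat in
theorem Vset_sum_eq_h (h : ℕ → ℤ)
    (h0 : h 0 = 1)
    (hrec : ∀ n : ℕ, 1 ≤ n → h n = ((2 * n + 1)‼ : ℤ)
      - ∑ k ∈ Finset.range n, ((2 * k + 1)‼ : ℤ) * h (n - 1 - k)) :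
    ∀ n : ℕ, 1 ≤ n → (∑ a ∈ Vset n, ∏ i : Fin n, (a i : ℤ)) = h n := by
  have key : ∀ n : ℕ, (T n 1 : ℤ) = h n := by
    intro n
    induction n using Nat.strong_induction_on with
    | _ n ih =>
      match n with
      | 0 => simpa [T] using h0.symm
      | (N+1) =>
        rw [hrec (N+1) (by omega)]
        have hk : ∀ k ∈ Finset.range (N+1),
            ((2*k+1)‼ : ℤ) * h (N+1-1-k) = ((2*k+1)‼ : ℤ) * (T (N+1-1-k) 1 : ℤ) := by
          intro k hk
          rw [← ih (N+1-1-k) (by omega)]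
        rw [Finset.sum_congr rfl hk]
        have hnat := key_nat (N+1)
        have hcast := congrArg (fun x : ℕ => (x : ℤ)) hnat
        push_cast at hcast ⊢
        linarith
  intro n _
  have hcast : (∑ a ∈ Vset n, ∏ i : Fin n, (a i : ℤ))
      = ((∑ a ∈ Vset n, ∏ i : Fin n, a i : ℕ) : ℤ) := by
    push_cast
    rfl
  rw [hcast, Vset_eq_Cset, Cset_sum]
  exact key n
end

section
/- The cardinality of V_n, the set of vectors (a_1,…,a_n) with a_1 = 2 and 2 ≤ a_i ≤ a_{i−1}+1 for 2 ≤ i ≤ n, equals the Catalan number c_n = C(2n,n)/(n+1). -/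
/-!
Shifting by `2`, `V_n` becomes the set of sequences `b` of naturals with `b 0 = 0` and
`b (i + 1) ≤ b i + 1`. Relaxing the start to `b 0 ≤ k` and splitting off the first entry gives
the recursion `S (n + 1) k = ∑_{j ≤ k} S n (j + 1)` for the number `S n k` of such sequences.
The ballot numbers `C(2n+k, n) - C(2n+k, n-1)` satisfy the same recursion by Pascal's rule, and
at `k = 0` they are the Catalan numbers.
-/

open Finset

section StepSeq

variable {n : ℕ}

def IsStepSeq (k : ℕ) (b : Fin n → ℕ) : Prop :=
  (∀ i : Fin n, (i : ℕ) = 0 → b i ≤ k) ∧ ∀ i j : Fin n, (j : ℕ) + 1 = i → b i ≤ b j + 1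

instance (k : ℕ) : DecidablePred (IsStepSeq (n := n) k) :=
  fun _ => inferInstanceAs (Decidable (_ ∧ _))

theorem IsStepSeq.le_add {k : ℕ} {b : Fin n → ℕ} (h : IsStepSeq k b) (i : Fin n) :
    b i ≤ k + i := by
  obtain ⟨i, hi⟩ := i
  induction i with
  | zero => simpa using h.1 ⟨0, hi⟩ rfl
  | succ i ih =>
    have hstep := h.2 ⟨i + 1, hi⟩ ⟨i, by omega⟩ rfl
    have hprev := ih (by omega)
    simp only at hstep hprev ⊢
    omega

theorem isStepSeq_cons_iff {k j : ℕ} {t : Fin n → ℕ} :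
    IsStepSeq k (Fin.cons j t : Fin (n + 1) → ℕ) ↔ j ≤ k ∧ IsStepSeq (j + 1) t := by
  constructor
  · rintro ⟨h0, hs⟩
    refine ⟨by simpa using h0 0 rfl, fun i hi => ?_, fun i i' hii' => ?_⟩
    · simpa using hs i.succ 0 (by simp [hi])
    · simpa using hs i.succ i'.succ (by simp [hii'])
  · rintro ⟨hj, h0, hs⟩
    refine ⟨fun i hi => ?_, fun i i' hii' => ?_⟩
    · obtain rfl : i = 0 := Fin.ext hi
      simpa using hj
    · cases i using Fin.cases with
      | zero => simp at hii'
      | succ i =>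
        cases i' using Fin.cases with
        | zero => simpa using h0 i (by simpa using hii'.symm)
        | succ i' => simpa using hs i i' (by simpa using hii')

end StepSeq

def stepSeqs (n k : ℕ) : Finset (Fin n → ℕ) :=
  (Fintype.piFinset fun _ => range (k + n)).filter (IsStepSeq k)

theorem mem_stepSeqs {n k : ℕ} {b : Fin n → ℕ} : b ∈ stepSeqs n k ↔ IsStepSeq k b := by
  simp only [stepSeqs, mem_filter, Fintype.mem_piFinset, mem_range, and_iff_right_iff_imp]
  exact fun h i => (h.le_add i).trans_lt (by omega)

theorem card_stepSeqs_succ (n k : ℕ) :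
    #(stepSeqs (n + 1) k) = ∑ j ∈ range (k + 1), #(stepSeqs n (j + 1)) := by
  rw [← card_sigma]
  refine (card_nbij' (fun p => Fin.cons p.1 p.2) (fun b => ⟨b 0, Fin.tail b⟩)
    ?_ ?_ ?_ ?_).symm
  · rintro ⟨j, t⟩ h
    simp only [coe_sigma, Set.mem_sigma_iff, mem_coe, mem_range, Nat.lt_succ_iff,
      mem_stepSeqs] at h ⊢
    exact isStepSeq_cons_iff.2 h
  · intro b h
    simp only [mem_coe, mem_stepSeqs] at h
    rw [← Fin.cons_self_tail b, isStepSeq_cons_iff] at h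
    simpa [mem_stepSeqs, Nat.lt_succ_iff] using h
  · rintro ⟨j, t⟩ -
    simp
  · rintro b -
    simp

/-- `C(2n+k, n-1)` is written as `C(2n+k, n+k+1)` so that no truncated subtraction occurs
at `n = 0`. -/
def ballot (n k : ℕ) : ℤ :=
  (2 * n + k).choose n - (2 * n + k).choose (n + k + 1)

theorem ballot_zero_left (k : ℕ) : ballot 0 k = 1 := by
  simp [ballot]

theorem ballot_succ_zero (n : ℕ) : ballot (n + 1) 0 = ballot n 1 := by
  simp only [ballot, show 2 * (n + 1) + 0 = 2 * n + 1 + 1 by ring]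
  rw [Nat.choose_succ_succ' (2 * n + 1) n, Nat.choose_succ_succ' (2 * n + 1) (n + 1)]
  push_cast
  abel

theorem ballot_succ_succ (n k : ℕ) :
    ballot (n + 1) (k + 1) = ballot (n + 1) k + ballot n (k + 2) := by
  simp only [ballot, show 2 * (n + 1) + (k + 1) = 2 * n + k + 2 + 1 by ring,
    show n + 1 + (k + 1) + 1 = n + k + 2 + 1 by ring, show 2 * (n + 1) + k = 2 * n + k + 2 by ring,
    show n + 1 + k + 1 = n + k + 2 by ring, show 2 * n + (k + 2) = 2 * n + k + 2 by ring,
    show n + (k + 2) + 1 = n + k + 2 + 1 by ring]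
  rw [Nat.choose_succ_succ' (2 * n + k + 2) n, Nat.choose_succ_succ' (2 * n + k + 2) (n + k + 2)]
  push_cast
  abel

theorem sum_range_ballot (n k : ℕ) :
    ∑ j ∈ range (k + 1), ballot n (j + 1) = ballot (n + 1) k := by
  induction k with
  | zero => rw [sum_range_one, ballot_succ_zero]
  | succ k ih => rw [sum_range_succ, ih, ballot_succ_succ]

theorem ballot_zero_right (n : ℕ) : ballot n 0 = catalan n := by
  have hchoose := Nat.choose_succ_right_eq (2 * n) n
  rw [show 2 * n - n = n by omega] at hchoose
  have hcat := succ_mul_catalan_eq_centralBinom n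
  rw [Nat.centralBinom_eq_two_mul_choose] at hcat
  apply mul_left_cancel₀ (show (n + 1 : ℤ) ≠ 0 by positivity)
  simp only [ballot, add_zero]
  zify at hchoose hcat
  linear_combination -hcat - hchoose

theorem card_stepSeqs (n k : ℕ) : (#(stepSeqs n k) : ℤ) = ballot n k := by
  induction n generalizing k with
  | zero =>
    rw [ballot_zero_left, Nat.cast_eq_one, card_eq_one]
    exact ⟨finZeroElim, eq_singleton_iff_unique_mem.2
      ⟨mem_stepSeqs.2 ⟨finZeroElim, finZeroElim⟩, fun b _ => Subsingleton.elim b _⟩⟩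
  | succ n ih =>
    rw [card_stepSeqs_succ, ← sum_range_ballot]
    push_cast
    exact sum_congr rfl fun j _ => ih (j + 1)

theorem card_Vset (n : ℕ) : #(Vset n) = #(stepSeqs n 0) := by
  refine card_nbij' (fun a i => a i - 2) (fun b i => b i + 2) ?_ ?_ ?_ ?_
  · intro a ha
    simp only [Vset, mem_coe, mem_filter, Fintype.mem_piFinset, mem_Icc] at ha
    obtain ⟨hrange, h0, hs⟩ := ha
    refine mem_stepSeqs.2 ⟨fun i hi => by simp [h0 i hi], fun i j hij => ?_⟩
    show a i - 2 ≤ a j - 2 + 1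
    have := (hs i j hij).2
    have := (hrange j).1
    omega
  · intro b hb
    replace hb := mem_stepSeqs.1 hb
    beta_reduce
    simp only [Vset, mem_coe, mem_filter, Fintype.mem_piFinset, mem_Icc]
    refine ⟨fun i => ?_, fun i hi => ?_, fun i j hij => ?_⟩
    · have := hb.le_add i
      omega
    · have := hb.1 i hi
      omega
    · have := hb.2 i j hij
      omega
  · intro a ha
    simp only [Vset, mem_coe, mem_filter, Fintype.mem_piFinset, mem_Icc] at ha
    funext i
    have := (ha.1 i).1
    beta_reduce
    omega
  · rintro b -
    simp

theorem Vset_card_eq_catalan :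
    ∀ n : ℕ, (Vset n).card = Nat.choose (2 * n) n / (n + 1) := by
  intro n
  have hcard : (#(Vset n) : ℤ) = catalan n := by
    rw [card_Vset, card_stepSeqs, ballot_zero_right]
  rw [← Nat.centralBinom_eq_two_mul_choose, ← catalan_eq_centralBinom_div]
  exact_mod_cast hcard
end

section
/- The number of histoires d'Hermite of size n (Dyck paths of size n with each up-step U_i ending at height y_i labeled by an integer in {1,…,y_i}) equals (2n−1)!! for all n ≥ 1. -/
/-- The prefix of a path ending at the `(i+1)`-th up-step (`0`-based index `i`). -/
def upTo : List Bool → ℕ → List Bool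
  | [], _ => []
  | true :: _, 0 => [true]
  | true :: rest, i + 1 => true :: upTo rest i
  | false :: rest, i => false :: upTo rest i

/-- The ordinate `y_i` of the endpoint of the `(i+1)`-th up-step (`0`-based index `i`). -/
def upHeight (p : List Bool) (i : ℕ) : ℕ :=
  (upTo p i).count true - (upTo p i).count false

/-- A Dyck path of size `n`: `n` up-steps (`true`) and `n` down-steps (`false`),
never passing below the x-axis. -/
def IsDyckPath (n : ℕ) (p : List Bool) : Prop :=
  p.length = 2 * n ∧ p.count true = n ∧
    ∀ q : List Bool, q <+: p → q.count false ≤ q.count true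

/-- A path is indecomposable when it touches the x-axis only at its endpoints. -/
def IsIndecomposable (p : List Bool) : Prop :=
  ∀ q : List Bool, q <+: p → q ≠ [] → q ≠ p → q.count false < q.count true

/-- The set `D_n`: Dyck paths of size `n` whose `i`-th up-step carries a label in `[1, y_i + 1]`. -/
def Dset (n : ℕ) : Set (List Bool × (Fin n → ℕ)) :=
  {pl | IsDyckPath n pl.1 ∧ ∀ i : Fin n, 1 ≤ pl.2 i ∧ pl.2 i ≤ upHeight pl.1 i + 1}

/-- Histoires d'Hermite of size `n`: Dyck paths of size `n` whose `i`-th up-step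
carries a label in `[1, y_i]`. -/
def Hset (n : ℕ) : Set (List Bool × (Fin n → ℕ)) :=
  {pl | IsDyckPath n pl.1 ∧ ∀ i : Fin n, 1 ≤ pl.2 i ∧ pl.2 i ≤ upHeight pl.1 i}

/-- Indecomposable histoires d'Hermite of size `n`. -/
def HindSet (n : ℕ) : Set (List Bool × (Fin n → ℕ)) :=
  {pl | pl ∈ Hset n ∧ IsIndecomposable pl.1}

/-!
A histoire of size `n` is a labeled path of length `2n` from height `0` back to `0`. Let
`T(m, h)` count the labeled paths of length `m` from height `h` down to `0`, where an up-step
leaving height `y` carries one of `y + 1` labels. Splitting off the first step gives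
`T(m + 1, h) = (h + 1) T(m, h + 1) + T(m, h - 1)`, which is solved by
`T(h + 2k, h) = (h + 2k)! / (2^k k! h!)`, the number of matchings of `h + 2k` points leaving
`h` of them unmatched. At `h = 0`, `k = n` this is `(2n)! / (2^n n!) = (2n - 1)‼`.
-/

open Finset
open scoped Nat

/-- Labeled paths of length `m` from height `h` down to `0`, as pairs (steps, labels of the
up-steps); an up-step from height `y` to `y + 1` carries a label in `[1, y + 1]`. -/
def labeledPaths : ℕ → ℕ → Finset (List Bool × List ℕ)
  | 0, h => if h = 0 then {([], [])} else ∅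
  | m + 1, h =>
    ((Icc 1 (h + 1) ×ˢ labeledPaths m (h + 1)).image fun x => (true :: x.2.1, x.1 :: x.2.2)) ∪
      match h with
      | 0 => ∅
      | h + 1 => (labeledPaths m h).image fun x => (false :: x.1, x.2)

private theorem upStep_injective : Function.Injective fun x : ℕ × (List Bool × List ℕ) =>
    (true :: x.2.1, x.1 :: x.2.2) := by
  rintro ⟨_, _, _⟩ ⟨_, _, _⟩ h
  simp_all

theorem card_labeledPaths_succ_zero (m : ℕ) :
    #(labeledPaths (m + 1) 0) = #(labeledPaths m 1) := by
  simp [labeledPaths, card_image_of_injective _ upStep_injective]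

theorem card_labeledPaths_succ_succ (m h : ℕ) :
    #(labeledPaths (m + 1) (h + 1)) = (h + 2) * #(labeledPaths m (h + 2)) + #(labeledPaths m h) := by
  have down_inj : Function.Injective fun x : List Bool × List ℕ => (false :: x.1, x.2) := by
    rintro ⟨_, _⟩ ⟨_, _⟩ h
    simp_all
  rw [labeledPaths, card_union_of_disjoint, card_image_of_injective _ upStep_injective,
    card_image_of_injective _ down_inj, card_product, Nat.card_Icc, Nat.add_sub_cancel]
  simp only [disjoint_left, mem_image]
  rintro _ ⟨_, _, rfl⟩ ⟨_, _, h⟩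
  simp at h

theorem labeledPaths_eq_empty_of_lt {m h : ℕ} (hmh : m < h) : labeledPaths m h = ∅ := by
  induction m generalizing h with
  | zero => simp [labeledPaths, hmh.ne']
  | succ m ih =>
    obtain _ | h := h
    · omega
    · simp [labeledPaths, ih (show m < h + 2 by omega), ih (show m < h by omega)]

theorem card_labeledPaths_mul_eq_factorial (h k : ℕ) :
    #(labeledPaths (h + 2 * k) h) * (2 ^ k * k ! * h !) = (h + 2 * k)! := by
  suffices ∀ m h k, m = h + 2 * k → #(labeledPaths m h) * (2 ^ k * k ! * h !) = m ! from
    this _ h k rfl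
  intro m
  induction m with
  | zero =>
    rintro h k hm
    obtain ⟨rfl, rfl⟩ : h = 0 ∧ k = 0 := by omega
    rfl
  | succ m ih =>
    rintro (_ | h) (_ | k) hm
    · omega
    · have := ih 1 k (by omega)
      rw [card_labeledPaths_succ_zero]
      simp only [pow_succ, Nat.factorial_succ, Nat.factorial_zero] at this ⊢
      linear_combination (2 * (k + 1)) * this + m ! * hm.symm
    · obtain rfl : m = h := by omega
      have := ih m 0 rfl
      rw [card_labeledPaths_succ_succ, labeledPaths_eq_empty_of_lt (by omega)]
      simp only [card_empty, pow_zero, Nat.factorial_zero, one_mul, Nat.factorial_succ] at this ⊢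
      linear_combination (m + 1) * this
    · have h1 := ih (h + 2) k (by omega)
      have h2 := ih h (k + 1) (by omega)
      rw [card_labeledPaths_succ_succ, Nat.factorial_succ]
      simp only [pow_succ, Nat.factorial_succ] at h1 h2 ⊢
      linear_combination (2 * (k + 1)) * h1 + (h + 1) * h2 + m ! * hm.symm

/-- The conditions defining `Hset`, for a path that starts at height `h` instead of `0`. -/
structure IsLabeledPath (h : ℕ) (p : List Bool) (vs : List ℕ) : Prop where
  length_labels : vs.length = p.count true
  count_false : p.count false = p.count true + h
  prefix_count : ∀ q, q <+: p → q.count false ≤ q.count true + h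
  label_bounds : ∀ i (hi : i < vs.length),
    1 ≤ vs[i] ∧ vs[i] + (upTo p i).count false ≤ h + (upTo p i).count true

theorem isLabeledPath_nil_iff {h : ℕ} {vs : List ℕ} :
    IsLabeledPath h [] vs ↔ h = 0 ∧ vs = [] := by
  constructor
  · rintro ⟨hlen, hcount, -, -⟩
    simp_all
  · rintro ⟨rfl, rfl⟩
    exact ⟨rfl, rfl, by simp, by simp⟩

theorem isLabeledPath_true_cons_iff {h : ℕ} {p : List Bool} {vs : List ℕ} :
    IsLabeledPath h (true :: p) vs ↔
      ∃ v ∈ Icc 1 (h + 1), ∃ vs', IsLabeledPath (h + 1) p vs' ∧ vs = v :: vs' := by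
  constructor
  · rintro ⟨hlen, hcount, hpre, hlab⟩
    obtain ⟨v, vs', rfl⟩ : ∃ v vs', vs = v :: vs' :=
      List.exists_cons_of_length_pos (by simp [hlen])
    have hv := hlab 0 (by simp)
    simp only [upTo, List.getElem_cons_zero, List.length_cons, List.count_cons, List.count_nil,
      beq_iff_eq, reduceCtorEq, if_false, if_true] at hlen hcount hv
    refine ⟨v, mem_Icc.2 (by omega), vs', ⟨by omega, by omega, fun q hq => ?_, fun i hi => ?_⟩, rfl⟩
    · have := hpre (true :: q) (List.cons_prefix_cons.2 ⟨rfl, hq⟩)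
      simp only [List.count_cons, beq_iff_eq, reduceCtorEq, if_false, if_true] at this
      omega
    · have := hlab (i + 1) (by simpa)
      simp only [upTo, List.getElem_cons_succ, List.count_cons, beq_iff_eq, reduceCtorEq, if_false,
        if_true] at this
      omega
  · rintro ⟨v, hv, vs', ⟨hlen, hcount, hpre, hlab⟩, rfl⟩
    rw [mem_Icc] at hv
    refine ⟨by simpa, ?_, fun q hq => ?_, fun i hi => ?_⟩
    · simp only [List.count_cons, beq_iff_eq, reduceCtorEq, if_false, if_true]
      omega
    · rcases List.prefix_cons_iff.1 hq with rfl | ⟨q', rfl, hq'⟩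
      · simp
      · have := hpre q' hq'
        simp only [List.count_cons, beq_iff_eq, reduceCtorEq, if_false, if_true]
        omega
    · rcases i with _ | i
      · simp [upTo, hv.1, hv.2]
      · have := hlab i (by simpa using hi)
        simp only [upTo, List.getElem_cons_succ, List.count_cons, beq_iff_eq, reduceCtorEq,
          if_false, if_true]
        omega

theorem isLabeledPath_false_cons_iff {h : ℕ} {p : List Bool} {vs : List ℕ} :
    IsLabeledPath h (false :: p) vs ↔ ∃ h', h = h' + 1 ∧ IsLabeledPath h' p vs := by
  constructor
  · rintro ⟨hlen, hcount, hpre, hlab⟩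
    obtain ⟨h', rfl⟩ : ∃ h', h = h' + 1 :=
      Nat.exists_eq_add_of_le' (by simpa using hpre [false] (by simp))
    simp only [List.count_cons, beq_iff_eq, reduceCtorEq, if_false, if_true] at hlen hcount
    refine ⟨h', rfl, by simpa using hlen, by omega, fun q hq => ?_, fun i hi => ?_⟩
    · have := hpre (false :: q) (List.cons_prefix_cons.2 ⟨rfl, hq⟩)
      simp only [List.count_cons, beq_iff_eq, reduceCtorEq, if_false, if_true] at this
      omega
    · have := hlab i hi
      simp only [upTo, List.count_cons, beq_iff_eq, reduceCtorEq, if_false, if_true] at this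
      omega
  · rintro ⟨h', rfl, hlen, hcount, hpre, hlab⟩
    refine ⟨by simpa, ?_, fun q hq => ?_, fun i hi => ?_⟩
    · simp only [List.count_cons, beq_iff_eq, reduceCtorEq, if_false, if_true]
      omega
    · rcases List.prefix_cons_iff.1 hq with rfl | ⟨q', rfl, hq'⟩
      · simp
      · have := hpre q' hq'
        simp only [List.count_cons, beq_iff_eq, reduceCtorEq, if_false, if_true]
        omega
    · have := hlab i hi
      simp only [upTo, List.count_cons, beq_iff_eq, reduceCtorEq, if_false, if_true]
      omega

theorem IsLabeledPath.length_eq {h : ℕ} {p : List Bool} {vs : List ℕ}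
    (hp : IsLabeledPath h p vs) : p.length = 2 * vs.length + h := by
  have := p.count_true_add_count_false
  have := hp.count_false
  have := hp.length_labels
  omega

theorem mem_labeledPaths {m h : ℕ} {p : List Bool} {vs : List ℕ} :
    (p, vs) ∈ labeledPaths m h ↔ p.length = m ∧ IsLabeledPath h p vs := by
  induction p generalizing m h vs with
  | nil =>
    cases m with
    | zero => by_cases hh : h = 0 <;> simp [labeledPaths, hh, isLabeledPath_nil_iff]
    | succ m => cases h <;> simp [labeledPaths]
  | cons b p ih =>
    cases m with
    | zero => by_cases hh : h = 0 <;> simp [labeledPaths, hh]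
    | succ m =>
      cases b <;> cases h <;>
        simp [labeledPaths, isLabeledPath_true_cons_iff, isLabeledPath_false_cons_iff, ih,
          eq_comm, and_assoc, and_left_comm]

theorem mem_Hset_iff {n : ℕ} {p : List Bool} {f : Fin n → ℕ} :
    (p, f) ∈ Hset n ↔ IsLabeledPath 0 p (List.ofFn f) := by
  have hcount := p.count_true_add_count_false
  simp only [Hset, IsDyckPath, Set.mem_ofPred_eq]
  constructor
  · rintro ⟨⟨hlen, htrue, hpre⟩, hlab⟩
    refine ⟨by simp [htrue], by omega, by simpa using hpre, fun i hi => ?_⟩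
    have := hlab ⟨i, by simpa using hi⟩
    simp only [upHeight, List.getElem_ofFn] at this ⊢
    omega
  · intro hp
    have hlen := hp.length_eq
    have htrue := hp.length_labels
    simp only [List.length_ofFn] at hlen htrue
    refine ⟨⟨by omega, htrue.symm, by simpa using hp.prefix_count⟩, fun i => ?_⟩
    have := hp.label_bounds i (by simp)
    simp only [upHeight, List.getElem_ofFn, Fin.eta] at this ⊢
    omega

theorem Hset_image_eq_labeledPaths (n : ℕ) :
    (fun x : List Bool × (Fin n → ℕ) => (x.1, List.ofFn x.2)) '' Hset n =
      labeledPaths (2 * n) 0 := by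
  ext ⟨p, vs⟩
  simp only [Set.mem_image, Prod.exists, Prod.mk.injEq, mem_coe, mem_labeledPaths]
  constructor
  · rintro ⟨p, f, hpf, rfl, rfl⟩
    have hp := mem_Hset_iff.1 hpf
    simpa [hp.length_eq] using hp
  · rintro ⟨hlen, hp⟩
    obtain rfl : vs.length = n := by have := hp.length_eq; omega
    exact ⟨p, vs.get, mem_Hset_iff.2 (by rwa [List.ofFn_get]), rfl, List.ofFn_get vs⟩

theorem card_Hset (n : ℕ) : Nat.card (Hset n) = #(labeledPaths (2 * n) 0) := by
  have hinj : Function.Injective fun x : List Bool × (Fin n → ℕ) => (x.1, List.ofFn x.2) := by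
    rintro ⟨_, _⟩ ⟨_, _⟩ h
    simp_all [List.ofFn_inj]
  rw [← Nat.card_image_of_injective hinj, Hset_image_eq_labeledPaths, Nat.card_coe_set_eq, Set.ncard_coe_finset]

theorem Nat.factorial_two_mul_eq_doubleFactorial_mul (n : ℕ) :
    (2 * n)! = (2 * n - 1)‼ * (2 ^ n * n !) := by
  rcases n with _ | n
  · rfl
  rw [← Nat.doubleFactorial_two_mul, show 2 * (n + 1) = 2 * n + 1 + 1 by ring,
    Nat.factorial_eq_mul_doubleFactorial, mul_comm, Nat.add_sub_cancel]

open Nat in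
theorem card_Hset_eq_doubleFactorial :
    ∀ n : ℕ, 1 ≤ n → Nat.card (Hset n) = (2 * n - 1)‼ := by
  intro n _
  have h := card_labeledPaths_mul_eq_factorial 0 n
  rw [zero_add, Nat.factorial_zero, mul_one, Nat.factorial_two_mul_eq_doubleFactorial_mul] at h
  rw [card_Hset]
  exact Nat.eq_of_mul_eq_mul_right (by positivity) h
end

section
/- The number of labeled Dyck paths of size n with each up-step U_i ending at height y_i labeled in {1,…,y_i+1} equals the number of indecomposable histoires d'Hermite of size n+1, for all n ≥ 0. -/
lemma upTo_prefix (p : List Bool) (i : ℕ) : upTo p i <+: p := by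
  induction p generalizing i with
  | nil => simp [upTo]
  | cons b rest ih =>
    cases b with
    | true =>
      cases i with
      | zero => simp [upTo]
      | succ j => simpa [upTo] using ih j
    | false => simpa [upTo] using ih i

lemma upTo_append (p r : List Bool) (i : ℕ) (h : i < p.count true) :
    upTo (p ++ r) i = upTo p i := by
  induction p generalizing i with
  | nil => simp at h
  | cons b rest ih =>
    cases b with
    | true =>
      cases i with
      | zero => simp [upTo]
      | succ j =>
        simp only [List.cons_append, upTo, List.append_eq]
        rw [ih]
        simp [List.count_cons] at h; omega
    | false =>
      simp only [List.cons_append, upTo, List.append_eq]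
      rw [ih]
      simpa using h

lemma prefix_concat_cases {q p : List Bool} {x : Bool} (h : q <+: p ++ [x]) :
    q <+: p ∨ q = p ++ [x] := by
  rcases Nat.lt_or_ge q.length (p ++ [x]).length with hl | hl
  · left
    refine List.prefix_of_prefix_length_le h (List.prefix_append p [x]) ?_
    simp at hl ⊢; omega
  · right
    exact h.eq_of_length (le_antisymm h.length_le hl)

lemma upHeight_cons_zero (t : List Bool) : upHeight (true :: t) 0 = 1 := by
  simp [upHeight, upTo]

lemma upHeight_conj (p : List Bool) (i : ℕ) (hi : i < p.count true)
    (hp : (upTo p i).count false ≤ (upTo p i).count true) :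
    upHeight (true :: (p ++ [false])) (i + 1) = upHeight p i + 1 := by
  have h3 : upTo (p ++ [false]) i = upTo p i := upTo_append p [false] i hi
  show (upTo (true :: (p ++ [false])) (i+1)).count true -
      (upTo (true :: (p ++ [false])) (i+1)).count false = _
  simp only [upTo, h3, List.count_cons, upHeight]
  simp
  omega

lemma count_add (p : List Bool) : p.count false + p.count true = p.length := by
  induction p with
  | nil => simp
  | cons b r ih => cases b <;> simp [List.count_cons] <;> omega

lemma count_false_of_dyck {n : ℕ} {p : List Bool} (h : IsDyckPath n p) :
    p.count false = n := by
  obtain ⟨hl, ht, -⟩ := h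
  have := count_add p
  omega

lemma dyck_conj {n : ℕ} {p : List Bool} (h : IsDyckPath n p) :
    IsDyckPath (n + 1) (true :: (p ++ [false])) := by
  obtain ⟨hl, ht, hpre⟩ := h
  refine ⟨by simp [hl]; ring, by simp [ht], ?_⟩
  intro q hq
  match q with
  | [] => simp
  | b :: r =>
    rw [List.cons_prefix_cons] at hq
    obtain ⟨rfl, hr⟩ := hq
    rcases prefix_concat_cases hr with hr' | rfl
    · have := hpre r hr'
      simp [List.count_cons]; omega
    · have hf := count_false_of_dyck ⟨hl, ht, hpre⟩
      simp [List.count_cons, ht, hf]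

lemma indec_conj {n : ℕ} {p : List Bool} (h : IsDyckPath n p) :
    IsIndecomposable (true :: (p ++ [false])) := by
  obtain ⟨hl, ht, hpre⟩ := h
  intro q hq hne hneq
  match q with
  | [] => exact absurd rfl hne
  | b :: r =>
    rw [List.cons_prefix_cons] at hq
    obtain ⟨rfl, hr⟩ := hq
    rcases prefix_concat_cases hr with hr' | rfl
    · have := hpre r hr'
      simp [List.count_cons]; omega
    · exact absurd rfl hneq

lemma decomp {n : ℕ} {q : List Bool} (hd : IsDyckPath (n + 1) q)
    (hi : IsIndecomposable q) :
    ∃ p : List Bool, q = true :: (p ++ [false]) ∧ IsDyckPath n p := by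
  obtain ⟨hl, ht, hpre⟩ := hd
  have hf := count_false_of_dyck ⟨hl, ht, hpre⟩
  -- q is nonempty
  have hqne : q ≠ [] := by intro h; rw [h] at hl; simp at hl
  -- first element is true
  obtain ⟨b, t, rfl⟩ := List.exists_cons_of_ne_nil hqne
  have hb : b = true := by
    have h1 : [b] <+: b :: t := by simp
    have h2 : ([b] : List Bool) ≠ b :: t := by
      intro h
      have ht' : t = [] := by simpa using congrArg List.length h
      subst ht'
      simp at hl; omega
    have := hi [b] h1 (by simp) h2
    cases b
    · simp at this
    · rfl
  subst hb
  -- last element is false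
  rcases t.eq_nil_or_concat' with rfl | ⟨p, x, rfl⟩
  · simp at hl; omega
  have hx : x = false := by
    by_contra hx
    have hx' : x = true := by revert hx; cases x <;> simp
    subst hx'
    -- dropLast prefix: true :: p
    have h1 : (true :: p) <+: (true :: (p ++ [true])) := by
      rw [List.cons_prefix_cons]
      exact ⟨rfl, List.prefix_append p [true]⟩
    have h2 : (true :: p) ≠ (true :: (p ++ [true])) := by
      intro h; have := congrArg List.length h; simp at this
    have h3 := hi _ h1 (by simp) h2
    simp [List.count_cons] at ht hf h3
    omega
  subst hx
  refine ⟨p, rfl, ?_, ?_, ?_⟩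
  · simp [List.count_cons] at hl ⊢; omega
  · simp [List.count_cons] at ht ⊢; omega
  · intro r hr
    have h1 : (true :: r) <+: (true :: (p ++ [false])) := by
      rw [List.cons_prefix_cons]
      exact ⟨rfl, hr.trans (List.prefix_append p [false])⟩
    have h2 : (true :: r) ≠ (true :: (p ++ [false])) := by
      intro h
      have := congrArg List.length h
      have := hr.length_le
      simp at *; omega
    have := hi _ h1 (by simp) h2
    simp [List.count_cons] at this
    omega

def conjMap (n : ℕ) (pl : List Bool × (Fin n → ℕ)) : List Bool × (Fin (n + 1) → ℕ) :=
  (true :: (pl.1 ++ [false]), Fin.cons 1 pl.2)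

lemma conj_bijOn (n : ℕ) : Set.BijOn (conjMap n) (Dset n) (HindSet (n + 1)) := by
  refine ⟨?_, ?_, ?_⟩
  · -- MapsTo
    rintro ⟨p, l⟩ ⟨hd, hlab⟩
    have ht := hd.2.1
    have hpre := hd.2.2
    refine ⟨⟨dyck_conj hd, ?_⟩, indec_conj hd⟩
    intro i
    induction i using Fin.cases with
    | zero =>
      simp only [conjMap, Fin.cons_zero]
      rw [show ((0 : Fin (n+1)) : ℕ) = 0 from rfl, upHeight_cons_zero]
      exact ⟨le_refl 1, le_refl 1⟩
    | succ i =>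
      simp only [conjMap, Fin.cons_succ]
      rw [Fin.val_succ, upHeight_conj p i (by rw [ht]; exact i.isLt)
        (hpre _ (upTo_prefix p i))]
      exact hlab i
  · -- InjOn
    rintro ⟨p, l⟩ - ⟨p', l'⟩ - h
    simp only [conjMap, Prod.mk.injEq, List.cons.injEq, true_and] at h
    obtain ⟨h1, h2⟩ := h
    have hp : p = p' := by
      have := List.append_cancel_right h1
      exact this
    refine Prod.ext hp ?_
    funext i
    have := congrFun h2 i.succ
    simpa [Fin.cons_succ] using this
  · -- SurjOn
    rintro ⟨q, m⟩ ⟨⟨hd, hlab⟩, hind⟩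
    obtain ⟨p, rfl, hp⟩ := decomp hd hind
    have ht := hp.2.1
    have hpre := hp.2.2
    have hm0 : m 0 = 1 := by
      have := hlab 0
      rw [show ((0 : Fin (n+1)) : ℕ) = 0 from rfl, upHeight_cons_zero] at this
      exact le_antisymm this.2 this.1
    refine ⟨(p, fun i => m i.succ), ⟨hp, ?_⟩, ?_⟩
    · intro i
      have := hlab i.succ
      rwa [Fin.val_succ, upHeight_conj p i (by rw [ht]; exact i.isLt)
        (hpre _ (upTo_prefix p i))] at this
    · refine Prod.ext rfl ?_
      show Fin.cons 1 (fun i => m i.succ) = m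
      funext j

      induction j using Fin.cases with
      | zero => simp [hm0]
      | succ j => simp [Fin.cons_succ]

theorem card_Dset_eq_card_indecomposable_histoires :
    ∀ n : ℕ, Nat.card (Dset n) = Nat.card (HindSet (n + 1)) := by
  intro n
  exact Nat.card_congr ((conj_bijOn n).equiv _)
end

section
/- For odd m ≥ 7 with m = 2n+1, the ratio of (2n+1)!!·(n−2)/n to c_n·c_{n+1} (where c_n is the n-th Catalan number) is at least (√(m−1)/(4√e))^m. -/
/-!
Since `m! = m‼ (m-1)‼ ≤ (m‼)²` and `m! ≥ (m/e)^m`, the double factorial satisfies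
`m‼ ≥ (√m / √e)^m ≥ (√(m-1) / √e)^m`. The central binomial coefficients are at most `4^n` and
`4^(n+1)`, so `c_n c_{n+1} ≤ 4^m / ((n+1)(n+2))`, and `(n-2)(n+1)(n+2) ≥ n` for `n ≥ 3` absorbs the
remaining polynomial factors.
-/

open Nat Real

theorem Nat.doubleFactorial_le_doubleFactorial_succ : ∀ n : ℕ, n‼ ≤ (n + 1)‼
  | 0 => le_rfl
  | 1 => by decide
  | n + 2 => by
    rw [doubleFactorial_add_two, show n + 2 + 1 = n + 1 + 2 by ring, doubleFactorial_add_two]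
    exact Nat.mul_le_mul (by omega) (doubleFactorial_le_doubleFactorial_succ n)

theorem Nat.factorial_le_doubleFactorial_sq : ∀ n : ℕ, n ! ≤ n‼ ^ 2
  | 0 => le_rfl
  | n + 1 => by
    rw [factorial_eq_mul_doubleFactorial, sq]
    exact Nat.mul_le_mul_left _ (doubleFactorial_le_doubleFactorial_succ n)

theorem Real.div_exp_one_pow_le_factorial (n : ℕ) : ((n : ℝ) / exp 1) ^ n ≤ n ! := by
  rw [div_pow, ← exp_nat_mul, mul_one, div_le_iff₀ (exp_pos _), mul_comm,
    ← div_le_iff₀ (by positivity)]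
  exact pow_div_factorial_le_exp _ n.cast_nonneg n

theorem Real.sqrt_div_sqrt_exp_one_pow_le_doubleFactorial (n : ℕ) :
    (√n / √(exp 1)) ^ n ≤ n‼ := by
  have hsq : ((√n / √(exp 1)) ^ n) ^ 2 ≤ ((n‼ : ℕ) : ℝ) ^ 2 := by
    rw [← pow_mul, mul_comm, pow_mul, div_pow, sq_sqrt n.cast_nonneg, sq_sqrt (exp_pos 1).le]
    exact (div_exp_one_pow_le_factorial n).trans (mod_cast factorial_le_doubleFactorial_sq n)
  exact (pow_le_pow_iff_left₀ (by positivity) (by positivity) two_ne_zero).mp hsq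

theorem Nat.choose_two_mul_le_four_pow (n : ℕ) : ((2 * n).choose n : ℝ) ≤ 4 ^ n := by
  rw [← centralBinom_eq_two_mul_choose]
  exact_mod_cast centralBinom_le_four_pow n

theorem Nat.choose_two_mul_mul_choose_two_mul_succ_le_four_pow (n : ℕ) :
    ((2 * n).choose n : ℝ) * (2 * (n + 1)).choose (n + 1) ≤ 4 ^ (2 * n + 1) :=
  calc ((2 * n).choose n : ℝ) * (2 * (n + 1)).choose (n + 1) ≤ 4 ^ n * 4 ^ (n + 1) :=
        mul_le_mul (choose_two_mul_le_four_pow n) (choose_two_mul_le_four_pow (n + 1))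
          (by positivity) (by positivity)
    _ = 4 ^ (2 * n + 1) := by ring

theorem one_le_sub_two_mul_add_one_mul_add_two_div_self {x : ℝ} (hx : 3 ≤ x) :
    1 ≤ (x - 2) * (x + 1) * (x + 2) / x := by
  rw [le_div_iff₀ (by linarith)]
  nlinarith [mul_le_mul_of_nonneg_right (by linarith : 1 ≤ x - 2)
    (by positivity : 0 ≤ (x + 1) * (x + 2))]

open Nat in
theorem lodgepole_bicaterpillar_ratio_bound :
    ∀ m n : ℕ, Odd m → 7 ≤ m → m = 2 * n + 1 →
      (Real.sqrt ((m : ℝ) - 1) / (4 * Real.sqrt (Real.exp 1))) ^ m ≤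
        (((2 * n + 1)‼ : ℝ) * ((n : ℝ) - 2) / (n : ℝ)) /
          (((Nat.choose (2 * n) n : ℝ) / ((n : ℝ) + 1)) *
            ((Nat.choose (2 * (n + 1)) (n + 1) : ℝ) / ((n : ℝ) + 2))) := by
  intro m n _ hm rfl
  have hn : (3 : ℝ) ≤ n := by exact_mod_cast (by omega : 3 ≤ n)
  set X : ℝ := (((2 * n + 1)‼ : ℕ) : ℝ)
  set c₁ : ℝ := (((2 * n).choose n : ℕ) : ℝ)
  set c₂ : ℝ := (((2 * (n + 1)).choose (n + 1) : ℕ) : ℝ)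
  have hc₀ : 0 < c₁ * c₂ := by
    have := choose_pos (by omega : n ≤ 2 * n)
    have := choose_pos (by omega : n + 1 ≤ 2 * (n + 1))
    positivity
  have hX : (√(((2 * n + 1 : ℕ) : ℝ) - 1) / √(exp 1)) ^ (2 * n + 1) ≤ X := by
    refine le_trans ?_ (sqrt_div_sqrt_exp_one_pow_le_doubleFactorial _)
    gcongr
    linarith
  have hc : c₁ * c₂ ≤ 4 ^ (2 * n + 1) := choose_two_mul_mul_choose_two_mul_succ_le_four_pow n
  calc (√(((2 * n + 1 : ℕ) : ℝ) - 1) / (4 * √(exp 1))) ^ (2 * n + 1)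
      = (√(((2 * n + 1 : ℕ) : ℝ) - 1) / √(exp 1)) ^ (2 * n + 1) / 4 ^ (2 * n + 1) := by
        rw [mul_comm 4, ← div_div, div_pow]
    _ ≤ X / (c₁ * c₂) := by gcongr
    _ ≤ X * ((n - 2) * (n + 1) * (n + 2) / n) / (c₁ * c₂) := by
        gcongr
        exact le_mul_of_one_le_right (by positivity)
          (one_le_sub_two_mul_add_one_mul_add_two_div_self hn)
    _ = _ := by field_simp
end

section
/- For all n ≥ 1, Σ_{k=0}^{n−1} (2k+1)!!·(2(n−1−k)+1)!!/(2n+1)!! = Σ_{k=0}^{n−1} C(n+1,k+1)/C(2n+2,2k+2), as an identity of rational numbers. -/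
open Nat

theorem Nat.cast_doubleFactorial_two_mul_add_one {K : Type*} [Field K] [CharZero K] (m : ℕ) :
    ((2 * m + 1)‼ : K) = (2 * (m + 1))! / (2 ^ (m + 1) * (m + 1)!) := by
  have h : (2 * (m + 1))! = (2 * m + 1)‼ * (2 ^ (m + 1) * (m + 1)!) := by
    rw [show 2 * (m + 1) = 2 * m + 1 + 1 by ring, factorial_eq_mul_doubleFactorial,
      show 2 * m + 1 + 1 = 2 * (m + 1) by ring, doubleFactorial_two_mul, mul_comm]
  rw [eq_div_iff (mul_ne_zero (pow_ne_zero _ two_ne_zero) (cast_ne_zero.2 (factorial_ne_zero _)))]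
  exact_mod_cast h.symm

/- With `p = k + 1`, `q = j + 1`, both sides equal `(2p)! (2q)! (p+q)! / ((2p+2q)! p! q!)`;
the powers `2^p 2^q / 2^(p+q)` cancel. -/
theorem Nat.doubleFactorial_mul_div_eq_choose_div_choose {K : Type*} [Field K] [CharZero K]
    (k j : ℕ) :
    ((2 * k + 1)‼ : K) * (2 * j + 1)‼ / (2 * (k + j + 1) + 1)‼
      = ((k + j + 2).choose (k + 1) : K) / (2 * (k + j + 1) + 2).choose (2 * k + 2) := by
  rw [cast_doubleFactorial_two_mul_add_one, cast_doubleFactorial_two_mul_add_one,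
    cast_doubleFactorial_two_mul_add_one, show k + j + 2 = (k + 1) + (j + 1) by ring,
    show 2 * (k + j + 1) + 2 = 2 * (k + 1) + 2 * (j + 1) by ring,
    show 2 * ((k + 1) + (j + 1)) = 2 * (k + 1) + 2 * (j + 1) by ring,
    show 2 * k + 2 = 2 * (k + 1) by ring, cast_add_choose, cast_add_choose]
  field_simp
  ring

open Nat in
theorem doubleFactorial_sum_eq_choose_sum :
    ∀ n : ℕ, 1 ≤ n →
      (∑ k ∈ Finset.range n,
        ((2 * k + 1)‼ : ℚ) * ((2 * (n - 1 - k) + 1)‼ : ℚ) / ((2 * n + 1)‼ : ℚ))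
        = ∑ k ∈ Finset.range n,
          (Nat.choose (n + 1) (k + 1) : ℚ) / (Nat.choose (2 * n + 2) (2 * k + 2) : ℚ) := by
  intro n _
  refine Finset.sum_congr rfl fun k hk => ?_
  obtain ⟨j, rfl⟩ : ∃ j, n = k + j + 1 := ⟨n - k - 1, by grind⟩
  rw [show k + j + 1 - 1 - k = j by omega, doubleFactorial_mul_div_eq_choose_div_choose]
end
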